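/- arXiv:2211.06950 — 5 statements merged into one kernel-verified Lean document; each statement's English description precedes it below -/
import Mathlib

section
/- For all integers n > d ≥ n/2, there exists an oriented graph G on n vertices with minimum degree (of the underlying graph) equal to d such that every Hamilton cycle C of G satisfies σ_max(C) ≤ d. (Hence the bound σ_max(C) ≥ δ(G) in the oriented Dirac discrepancy theorem cannot be improved.) -/
open Function

/-- An oriented graph: an asymmetric (hence irreflexive) relation, i.e. no 2-cycles. -/
def Oriented {V : Type*} (E : V → V → Prop) : Prop := ∀ u v, E u v → ¬ E v u

/-- Adjacency in the underlying undirected graph. -/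
def UAdj {V : Type*} (E : V → V → Prop) (u v : V) : Prop := E u v ∨ E v u

/-- Degree of a vertex in the underlying undirected graph. -/
noncomputable def udeg {V : Type*} (E : V → V → Prop) (x : V) : ℕ := Nat.card {y : V // UAdj E x y}

/-- Cyclic successor of an index. -/
def cnext {m : ℕ} (i : Fin m) : Fin m := ⟨(i.val + 1) % m, Nat.mod_lt _ i.pos⟩

/-- A Hamilton cycle of an oriented graph on `Fin n`, given as a cyclic listing of
all vertices (consecutive vertices, when distinct, are joined by an edge). -/
def IsHamCycle {n : ℕ} (E : Fin n → Fin n → Prop) (c : Fin n → Fin n) : Prop :=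
  Bijective c ∧ ∀ i : Fin n, c i ≠ c (cnext i) → UAdj E (c i) (c (cnext i))

/-- Number of forward edges of a Hamilton cycle. -/
noncomputable def sigmaPlusHC {n : ℕ} (E : Fin n → Fin n → Prop) (c : Fin n → Fin n) : ℕ :=
  Nat.card {i : Fin n // E (c i) (c (cnext i))}

/-- Number of backward edges of a Hamilton cycle. -/
noncomputable def sigmaMinusHC {n : ℕ} (E : Fin n → Fin n → Prop) (c : Fin n → Fin n) : ℕ :=
  Nat.card {i : Fin n // E (c (cnext i)) (c i)}

noncomputable def sigmaMaxHC {n : ℕ} (E : Fin n → Fin n → Prop) (c : Fin n → Fin n) : ℕ :=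
  max (sigmaPlusHC E c) (sigmaMinusHC E c)

noncomputable def sigmaMinHC {n : ℕ} (E : Fin n → Fin n → Prop) (c : Fin n → Fin n) : ℕ :=
  min (sigmaPlusHC E c) (sigmaMinusHC E c)

/-- A (not necessarily spanning) cycle on `m` vertices in an oriented graph on `Fin n`. -/
def IsCycleOn {n m : ℕ} (E : Fin n → Fin n → Prop) (c : Fin m → Fin n) : Prop :=
  3 ≤ m ∧ Injective c ∧ ∀ i : Fin m, UAdj E (c i) (c (cnext i))

noncomputable def sigmaPlusCyc {n m : ℕ} (E : Fin n → Fin n → Prop) (c : Fin m → Fin n) : ℕ :=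
  Nat.card {i : Fin m // E (c i) (c (cnext i))}

noncomputable def sigmaMinusCyc {n m : ℕ} (E : Fin n → Fin n → Prop) (c : Fin m → Fin n) : ℕ :=
  Nat.card {i : Fin m // E (c (cnext i)) (c i)}

noncomputable def sigmaMaxCyc {n m : ℕ} (E : Fin n → Fin n → Prop) (c : Fin m → Fin n) : ℕ :=
  max (sigmaPlusCyc E c) (sigmaMinusCyc E c)

noncomputable def sigmaMinCyc {n m : ℕ} (E : Fin n → Fin n → Prop) (c : Fin m → Fin n) : ℕ :=
  min (sigmaPlusCyc E c) (sigmaMinusCyc E c)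

/-- A path on `m + 1` vertices (`m` edges) in an oriented graph on `Fin n`. -/
def IsPathOn {n m : ℕ} (E : Fin n → Fin n → Prop) (p : Fin (m + 1) → Fin n) : Prop :=
  Injective p ∧ ∀ i : Fin m, UAdj E (p i.castSucc) (p i.succ)

noncomputable def sigmaPlusPath {n m : ℕ} (E : Fin n → Fin n → Prop) (p : Fin (m + 1) → Fin n) : ℕ :=
  Nat.card {i : Fin m // E (p i.castSucc) (p i.succ)}

noncomputable def sigmaMinusPath {n m : ℕ} (E : Fin n → Fin n → Prop) (p : Fin (m + 1) → Fin n) : ℕ :=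
  Nat.card {i : Fin m // E (p i.succ) (p i.castSucc)}

noncomputable def sigmaMaxPath {n m : ℕ} (E : Fin n → Fin n → Prop) (p : Fin (m + 1) → Fin n) : ℕ :=
  max (sigmaPlusPath E p) (sigmaMinusPath E p)

noncomputable def sigmaMinPath {n m : ℕ} (E : Fin n → Fin n → Prop) (p : Fin (m + 1) → Fin n) : ℕ :=
  min (sigmaPlusPath E p) (sigmaMinusPath E p)


def myE (n d : ℕ) : Fin n → Fin n → Prop := fun u v => v.val < d ∧ v.val < u.val

lemma cnext_injective {m : ℕ} : Injective (cnext (m := m)) := by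
  intro i j h
  have hi := i.isLt
  have hj := j.isLt
  have hv : (i.val + 1) % m = (j.val + 1) % m := congrArg Fin.val h
  apply Fin.ext
  rcases Nat.lt_or_ge (i.val + 1) m with h1 | h1
  · rcases Nat.lt_or_ge (j.val + 1) m with h2 | h2
    · rw [Nat.mod_eq_of_lt h1, Nat.mod_eq_of_lt h2] at hv; omega
    · have hj' : j.val + 1 = m := by omega
      rw [Nat.mod_eq_of_lt h1, hj', Nat.mod_self] at hv; omega
  · have h1' : i.val + 1 = m := by omega
    rcases Nat.lt_or_ge (j.val + 1) m with h2 | h2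
    · rw [h1', Nat.mod_self, Nat.mod_eq_of_lt h2] at hv; omega
    · omega

lemma myE_deg (n d : ℕ) (hd : d < n) (x : Fin n) :
    udeg (myE n d) x = if x.val < d then n - 1 else d := by
  unfold udeg
  by_cases hx : x.val < d
  · rw [if_pos hx]
    have e : {y : Fin n // UAdj (myE n d) x y} ≃ {y : Fin n // ¬ y = x} :=
      Equiv.subtypeEquivRight (by
        intro y
        constructor
        · rintro (⟨h1, h2⟩ | ⟨h1, h2⟩) heq <;> subst heq <;> omega
        · intro hy
          rcases Nat.lt_trichotomy y.val x.val with h | h | h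
          · exact Or.inl ⟨by omega, h⟩
          · exact absurd (Fin.ext h) hy
          · exact Or.inr ⟨hx, h⟩)
    rw [Nat.card_congr e, Nat.card_eq_fintype_card, Fintype.card_subtype_compl,
      Fintype.card_subtype_eq, Fintype.card_fin]
  · rw [if_neg hx]
    have e : {y : Fin n // UAdj (myE n d) x y} ≃ Fin d :=
      { toFun := fun y => ⟨(y.val).val, by
          rcases y.prop with ⟨h1, _⟩ | ⟨h1, _⟩
          · exact h1
          · exact absurd h1 hx⟩
        invFun := fun z => ⟨⟨z.val, z.isLt.trans hd⟩,
          Or.inl ⟨z.isLt, lt_of_lt_of_le z.isLt (le_of_not_gt hx)⟩⟩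
        left_inv := fun y => by ext; rfl
        right_inv := fun z => by ext; rfl }
    rw [Nat.card_congr e, Nat.card_eq_fintype_card, Fintype.card_fin]

/-- **Sharpness.** For all `n > d ≥ n/2` there is an oriented graph on `n` vertices with
underlying minimum degree exactly `d` all of whose Hamilton cycles `C` satisfy
`σ_max(C) ≤ d`. -/
theorem oriented_dirac_discrepancy_sharp (n d : ℕ) (hd : d < n) (hd2 : n ≤ 2 * d) :
    ∃ E : Fin n → Fin n → Prop, Oriented E ∧
      (∀ x : Fin n, d ≤ udeg E x) ∧ (∃ x : Fin n, udeg E x = d) ∧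
      ∀ c : Fin n → Fin n, IsHamCycle E c → sigmaMaxHC E c ≤ d := by
  refine ⟨myE n d, ?_, ?_, ?_, ?_⟩
  · rintro u v ⟨h1, h2⟩ ⟨h3, h4⟩; omega
  · intro x
    rw [myE_deg n d hd]
    split <;> omega
  · exact ⟨⟨d, hd⟩, by rw [myE_deg n d hd]; simp⟩
  · rintro c ⟨hbij, -⟩
    have h1 : sigmaPlusHC (myE n d) c ≤ d := by
      have h := Nat.card_le_card_of_injective
        (fun i : {i : Fin n // myE n d (c i) (c (cnext i))} =>
          (⟨(c (cnext i.val)).val, i.prop.1⟩ : Fin d))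
        (by
          intro i j h
          simp only [Fin.mk.injEq] at h
          exact Subtype.ext (cnext_injective (hbij.injective (Fin.ext h))))
      simpa [sigmaPlusHC, Nat.card_eq_fintype_card] using h
    have h2 : sigmaMinusHC (myE n d) c ≤ d := by
      have h := Nat.card_le_card_of_injective
        (fun i : {i : Fin n // myE n d (c (cnext i)) (c i)} =>
          (⟨(c i.val).val, i.prop.1⟩ : Fin d))
        (by
          intro i j h
          simp only [Fin.mk.injEq] at h
          exact Subtype.ext (hbij.injective (Fin.ext h)))
      simpa [sigmaMinusHC, Nat.card_eq_fintype_card] using h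
    exact max_le h1 h2
end

section
/- Let G be the oriented graph with vertex set A ∪ B, |A| = d, |B| = n − d, n > d ≥ n/2, whose edges are exactly the pairs with at least one endpoint in A, with every edge joining B to A oriented from B to A. Then every Hamilton cycle C in G satisfies σ_min(C) ≥ n − d, and consequently σ_max(C) ≤ d. -/
open Function

/-- **Construction 1.** Let `A = {x : x < d}`, `B = {x : d ≤ x}` with `n > d ≥ n/2`.
If the edges of the oriented graph `E` are exactly the pairs meeting `A`, and every
edge between `B` and `A` is oriented from `B` to `A`, then every Hamilton cycle `C`
satisfies `σ_min(C) ≥ n - d`, hence `σ_max(C) ≤ d`. -/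
theorem construction_discrepancy_bound (n d : ℕ) (hd : d < n) (hd2 : n ≤ 2 * d)
    (E : Fin n → Fin n → Prop) (hE : Oriented E)
    (hAdj : ∀ x y : Fin n, UAdj E x y ↔ ((x.val < d ∨ y.val < d) ∧ x ≠ y))
    (hBA : ∀ x y : Fin n, d ≤ x.val → y.val < d → ¬ E y x) :
    ∀ c : Fin n → Fin n, IsHamCycle E c →
      n - d ≤ sigmaMinHC E c ∧ sigmaMaxHC E c ≤ d := by
  classical
  intro c hc
  obtain ⟨hcbij, hcadj⟩ := hc
  have hn2 : 2 ≤ n := by omega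
  haveI : NeZero n := ⟨by omega⟩
  have hcnext_ne : ∀ i : Fin n, cnext i ≠ i := by
    intro i h
    have h' : (i.val + 1) % n = i.val := congrArg Fin.val h
    rcases Nat.lt_or_ge (i.val + 1) n with hl | hl
    · rw [Nat.mod_eq_of_lt hl] at h'; omega
    · have hi1 : i.val + 1 = n := by have := i.isLt; omega
      rw [hi1, Nat.mod_self] at h'; omega
  have hne : ∀ i : Fin n, c i ≠ c (cnext i) := fun i h =>
    hcnext_ne i (hcbij.1 h.symm)
  have hU : ∀ i : Fin n, UAdj E (c i) (c (cnext i)) := fun i => hcadj i (hne i)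
  have key1 : ∀ i : Fin n, d ≤ (c i).val → E (c i) (c (cnext i)) := by
    intro i hi
    have h := (hAdj _ _).mp (hU i)
    have hlt : (c (cnext i)).val < d := by rcases h.1 with h1 | h1 <;> omega
    rcases hU i with h | h
    · exact h
    · exact absurd h (hBA _ _ hi hlt)
  have key2 : ∀ i : Fin n, d ≤ (c (cnext i)).val → E (c (cnext i)) (c i) := by
    intro i hi
    have h := (hAdj _ _).mp (hU i)
    have hlt : (c i).val < d := by rcases h.1 with h1 | h1 <;> omega
    rcases hU i with h | h
    · exact absurd h (hBA _ _ hi hlt)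
    · exact h
  have hB : Nat.card {x : Fin n // d ≤ x.val} = n - d := by
    have e : {x : Fin n // d ≤ x.val} ≃ Fin (n - d) :=
      { toFun := fun x => ⟨x.1.val - d, by have := x.1.isLt; have := x.2; omega⟩
        invFun := fun j => ⟨⟨j.val + d, by have := j.isLt; omega⟩, by simp⟩
        left_inv := by intro x; ext; have := x.2; simp; omega
        right_inv := by intro j; ext; simp }
    rw [Nat.card_congr e]; simp
  have hcount1 : Nat.card {i : Fin n // d ≤ (c i).val} = n - d := by
    rw [← hB]
    exact Nat.card_congr ((Equiv.ofBijective c hcbij).subtypeEquiv (fun i => Iff.rfl))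
  have ecn : ∀ i : Fin n, cnext i = i + 1 := by
    intro i; ext
    simp [cnext, Fin.add_def, Fin.val_one', Nat.mod_eq_of_lt hn2]
  have hcount2 : Nat.card {i : Fin n // d ≤ (c (cnext i)).val} = n - d := by
    rw [← hcount1]
    refine Nat.card_congr ((Equiv.addRight (1 : Fin n)).subtypeEquiv (fun i => ?_))
    rw [ecn i]
    simp only [Equiv.coe_addRight]
  have hle1 : Nat.card {i : Fin n // d ≤ (c i).val} ≤ sigmaPlusHC E c := by
    unfold sigmaPlusHC
    have hsub : {i : Fin n | d ≤ (c i).val} ⊆ {i : Fin n | E (c i) (c (cnext i))} :=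
      fun i hi => key1 i hi
    exact Set.ncard_le_ncard hsub (Set.toFinite _)
  have hle2 : Nat.card {i : Fin n // d ≤ (c (cnext i)).val} ≤ sigmaMinusHC E c := by
    unfold sigmaMinusHC
    have hsub : {i : Fin n | d ≤ (c (cnext i)).val} ⊆ {i : Fin n | E (c (cnext i)) (c i)} :=
      fun i hi => key2 i hi
    exact Set.ncard_le_ncard hsub (Set.toFinite _)
  have hsum : sigmaPlusHC E c + sigmaMinusHC E c ≤ n := by
    unfold sigmaPlusHC sigmaMinusHC
    rw [Nat.card_eq_fintype_card, Nat.card_eq_fintype_card, Fintype.card_subtype,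
      Fintype.card_subtype]
    have hdisj : Disjoint (Finset.univ.filter (fun i : Fin n => E (c i) (c (cnext i))))
        (Finset.univ.filter (fun i : Fin n => E (c (cnext i)) (c i))) :=
      Finset.disjoint_filter.mpr (fun i _ h1 h2 => hE _ _ h1 h2)
    calc _ = ((Finset.univ.filter (fun i : Fin n => E (c i) (c (cnext i)))) ∪
          (Finset.univ.filter (fun i : Fin n => E (c (cnext i)) (c i)))).card :=
          (Finset.card_union_of_disjoint hdisj).symm
      _ ≤ (Finset.univ : Finset (Fin n)).card := Finset.card_le_card (Finset.subset_univ _)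
      _ = n := by simp
  have h1 : n - d ≤ sigmaPlusHC E c := hcount1 ▸ hle1
  have h2 : n - d ≤ sigmaMinusHC E c := hcount2 ▸ hle2
  unfold sigmaMinHC sigmaMaxHC
  omega
end

section
/- Let G be an oriented graph on n vertices with minimum degree δ(G) ≥ n/2 + 1. Suppose P = u_1...u_s is a path and C a cycle in G, vertex-disjoint with V(G) = V(P) ∪ V(C), where s = 2, σ^-(P) = 0, and σ^-(C) ≤ ℓ − 2 for some natural number ℓ. Then G contains a Hamilton cycle C* with σ_min(C*) ≤ ℓ. (Base case: since d(u_1,C) + d(u_2,C) ≥ 2(δ(G) − 1) ≥ n > |C|, there is an index i with v_i adjacent to u_1 and v_{i+1} adjacent to u_2, allowing insertion of the path into the cycle at cost at most 2 backward edges.) -/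
open Function

section Aux

lemma mod_add_cancel {m a x y : ℕ} (hx : x < m) (hy : y < m)
    (h : (a + x) % m = (a + y) % m) : x = y := by
  have h' : x ≡ y [MOD m] := Nat.ModEq.add_left_cancel' a h
  have h2 : x % m = y % m := h'
  rwa [Nat.mod_eq_of_lt hx, Nat.mod_eq_of_lt hy] at h2

lemma succ_mod {m : ℕ} (hm : 1 < m) (a : ℕ) : (a % m + 1) % m = (a + 1) % m := by
  conv_rhs => rw [Nat.add_mod]
  rw [Nat.mod_eq_of_lt hm]

lemma cnext_inj {m : ℕ} : Function.Injective (cnext (m := m)) := by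
  intro i j h
  have hv : (i.val + 1) % m = (j.val + 1) % m := congrArg Fin.val h
  have hv' : (1 + i.val) % m = (1 + j.val) % m := by
    rwa [Nat.add_comm 1 i.val, Nat.add_comm 1 j.val]
  exact Fin.ext (mod_add_cancel i.isLt j.isLt hv')

lemma nat_card_pigeon {ι : Type*} [Fintype ι] (A B : ι → Prop)
    (h : Fintype.card ι < Nat.card {i // A i} + Nat.card {i // B i}) :
    ∃ i, A i ∧ B i := by
  classical
  by_contra hno
  push_neg at hno
  have hA : Nat.card {i // A i} = (Finset.univ.filter A).card := by
    rw [Nat.card_eq_fintype_card, Fintype.card_subtype]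
  have hB : Nat.card {i // B i} = (Finset.univ.filter B).card := by
    rw [Nat.card_eq_fintype_card, Fintype.card_subtype]
  have hd : Disjoint (Finset.univ.filter A) (Finset.univ.filter B) := by
    simp only [Finset.disjoint_left, Finset.mem_filter]
    rintro x ⟨-, hx⟩ ⟨-, hx'⟩
    exact hno x hx hx'
  have h1 := Finset.card_union_of_disjoint hd
  have h2 : (Finset.univ.filter A ∪ Finset.univ.filter B).card ≤ Fintype.card ι :=
    le_trans (Finset.card_le_card (Finset.subset_univ _)) (le_of_eq Finset.card_univ)
  omega

lemma card_adj_bound {n m : ℕ} {E : Fin n → Fin n → Prop} (hE : Oriented E)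
    (c : Fin m → Fin n) (u w : Fin n)
    (hcover : ∀ x : Fin n, (∃ i, c i = x) ∨ x = u ∨ x = w) :
    udeg E u ≤ Nat.card {i : Fin m // UAdj E u (c i)} + 1 := by
  classical
  have hirr : ∀ x : Fin n, ¬ UAdj E x x := by
    rintro x (h | h) <;> exact hE x x h h
  have key : ∀ y : Fin n, UAdj E u y → ¬ (∃ i, c i = y) → y = w := by
    intro y hy hne
    rcases hcover y with h | h | h
    · exact absurd h hne
    · exact absurd (h ▸ hy) (hirr u)
    · exact h
  have hinj : Function.Injective
      (fun y : {y : Fin n // UAdj E u y} =>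
        if h : ∃ i, c i = y.val then
          (Sum.inl ⟨h.choose, by rw [h.choose_spec]; exact y.prop⟩ :
            {i : Fin m // UAdj E u (c i)} ⊕ Fin 1)
        else Sum.inr 0) := by
    intro y₁ y₂ hf
    dsimp only at hf
    split_ifs at hf with h₁ h₂ h₂
    all_goals try exact Sum.noConfusion hf
    · have h3 : h₁.choose = h₂.choose :=
        congrArg Subtype.val (Sum.inl.inj hf)
      apply Subtype.ext
      rw [← h₁.choose_spec, ← h₂.choose_spec, h3]
    · exact Subtype.ext ((key _ y₁.prop h₁).trans (key _ y₂.prop h₂).symm)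
  calc udeg E u ≤ Nat.card ({i : Fin m // UAdj E u (c i)} ⊕ Fin 1) :=
        Nat.card_le_card_of_injective _ hinj
    _ = Nat.card {i : Fin m // UAdj E u (c i)} + 1 := by
        rw [Nat.card_sum, Nat.card_eq_fintype_card (α := Fin 1), Fintype.card_fin]

end Aux

/-- **Lemma, base case `s = 2`.** `δ(G) ≥ n/2 + 1`, `P = u₁u₂` a path with
`σ⁻(P) = 0`, `C` a cycle on the remaining `n - 2` vertices with `σ⁻(C) ≤ ℓ - 2`.
Then `G` has a Hamilton cycle `C*` with `σ_min(C*) ≤ ℓ`. -/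


theorem path_cycle_insert_base_two (n ℓ δ : ℕ)
    (E : Fin n → Fin n → Prop) (hE : Oriented E)
    (hδlb : ∀ x : Fin n, δ ≤ udeg E x) (hδ : n + 2 ≤ 2 * δ)
    (p : Fin (1 + 1) → Fin n) (hp : IsPathOn E p) (hpσ : sigmaMinusPath E p = 0)
    (c : Fin (n - 2) → Fin n) (hc : IsCycleOn E c)
    (hdisj : ∀ i j, c i ≠ p j)
    (hcover : ∀ x : Fin n, (∃ i, c i = x) ∨ (∃ j, p j = x))
    (hσC : sigmaMinusCyc E c + 2 ≤ ℓ) :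
    ∃ C : Fin n → Fin n, IsHamCycle E C ∧ sigmaMinHC E C ≤ ℓ := by
  classical
  obtain ⟨hm3, hcinj, hcadj⟩ := hc
  have hn5 : 5 ≤ n := by omega
  have hmn : n - 2 + 2 = n := by omega
  -- the single path edge is forward
  have hcs : ((0 : Fin 1).castSucc : Fin (1+1)) = 0 := by decide
  have hsc : ((0 : Fin 1).succ : Fin (1+1)) = 1 := by decide
  have e01 : E (p 0) (p 1) := by
    have h0 := hpσ
    unfold sigmaMinusPath at h0
    rw [Nat.card_eq_zero] at h0
    have h1 := hp.2 0
    rw [hcs, hsc] at h1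
    rcases h1 with h1 | h1
    · exact h1
    · exfalso
      rcases h0 with h0 | h0
      · exact h0.false ⟨0, by rw [hcs, hsc]; exact h1⟩
      · exact absurd h0 (not_infinite_iff_finite.mpr (Finite.of_fintype _))
  have hp01 : p 0 ≠ p 1 := fun h => by
    have := hp.1 h; exact absurd (congrArg Fin.val this) (by decide)
  have hcover' : ∀ u w : Fin n, (u = p 0 ∧ w = p 1) ∨ (u = p 1 ∧ w = p 0) →
      ∀ x : Fin n, (∃ i, c i = x) ∨ x = u ∨ x = w := by
    rintro u w h x
    rcases hcover x with hx | ⟨j, hj⟩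
    · exact Or.inl hx
    · right
      have hj2 : x = p 0 ∨ x = p 1 := by
        fin_cases j
        · exact Or.inl hj.symm
        · exact Or.inr hj.symm
      rcases h with ⟨rfl, rfl⟩ | ⟨rfl, rfl⟩
      · exact hj2
      · exact hj2.symm
  -- degree bounds
  have hA : δ ≤ Nat.card {i : Fin (n-2) // UAdj E (p 0) (c i)} + 1 :=
    le_trans (hδlb (p 0)) (card_adj_bound hE c (p 0) (p 1)
      (hcover' _ _ (Or.inl ⟨rfl, rfl⟩)))
  have hB' : δ ≤ Nat.card {j : Fin (n-2) // UAdj E (p 1) (c j)} + 1 :=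
    le_trans (hδlb (p 1)) (card_adj_bound hE c (p 1) (p 0)
      (hcover' _ _ (Or.inr ⟨rfl, rfl⟩)))
  -- transfer hB' through the bijection cnext
  have hcnbij : Function.Bijective (cnext (m := n - 2)) :=
    Finite.injective_iff_bijective.mp cnext_inj
  have hBcard : Nat.card {i : Fin (n-2) // UAdj E (p 1) (c (cnext i))}
      = Nat.card {j : Fin (n-2) // UAdj E (p 1) (c j)} :=
    Nat.card_congr ((Equiv.ofBijective _ hcnbij).subtypeEquiv (fun i => Iff.rfl))
  have hB : δ ≤ Nat.card {i : Fin (n-2) // UAdj E (p 1) (c (cnext i))} + 1 := by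
    rw [hBcard]; exact hB'
  -- pigeonhole
  obtain ⟨i₀, hA₀, hB₀⟩ := nat_card_pigeon
    (fun i : Fin (n-2) => UAdj E (p 0) (c i))
    (fun i : Fin (n-2) => UAdj E (p 1) (c (cnext i)))
    (by
      rw [Fintype.card_fin]
      show n - 2 < Nat.card {i : Fin (n-2) // UAdj E (p 0) (c i)} +
        Nat.card {i : Fin (n-2) // UAdj E (p 1) (c (cnext i))}
      omega)
  -- the Hamilton cycle
  set a : ℕ := i₀.val + 1 with ha
  have hmpos : 0 < n - 2 := by omega
  set C : Fin n → Fin n := fun k =>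
    if h : k.val < n - 2 then c ⟨(a + k.val) % (n - 2), Nat.mod_lt _ hmpos⟩
    else if k.val = n - 2 then p 0 else p 1 with hCdef
  have hClt : ∀ k : Fin n, (h : k.val < n - 2) →
      C k = c ⟨(a + k.val) % (n - 2), Nat.mod_lt _ hmpos⟩ := by
    intro k h; simp only [hCdef, dif_pos h]
  have hCeq : ∀ k : Fin n, k.val = n - 2 → C k = p 0 := by
    intro k h; simp only [hCdef, dif_neg (by omega : ¬ k.val < n - 2), if_pos h]
  have hCgt : ∀ k : Fin n, n - 2 < k.val → C k = p 1 := by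
    intro k h
    simp only [hCdef, dif_neg (by omega : ¬ k.val < n - 2), if_neg (by omega : ¬ k.val = n - 2)]
  have hcnv : ∀ k : Fin n, (cnext k).val = (k.val + 1) % n := fun k => rfl
  -- injectivity
  have hCinj : Function.Injective C := by
    intro k₁ k₂ hk
    rcases lt_or_ge k₁.val (n-2) with h₁ | h₁ <;> rcases lt_or_ge k₂.val (n-2) with h₂ | h₂
    · rw [hClt k₁ h₁, hClt k₂ h₂] at hk
      have := congrArg Fin.val (hcinj hk)
      exact Fin.ext (mod_add_cancel h₁ h₂ this)
    · exfalso
      rw [hClt k₁ h₁] at hk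
      rcases eq_or_lt_of_le h₂ with h₂' | h₂'
      · rw [hCeq k₂ h₂'.symm] at hk; exact hdisj _ _ hk
      · rw [hCgt k₂ h₂'] at hk; exact hdisj _ _ hk
    · exfalso
      rw [hClt k₂ h₂] at hk
      rcases eq_or_lt_of_le h₁ with h₁' | h₁'
      · rw [hCeq k₁ h₁'.symm] at hk; exact hdisj _ _ hk.symm
      · rw [hCgt k₁ h₁'] at hk; exact hdisj _ _ hk.symm
    · have hb₁ := k₁.isLt
      have hb₂ := k₂.isLt
      rcases eq_or_lt_of_le h₁ with h₁' | h₁' <;> rcases eq_or_lt_of_le h₂ with h₂' | h₂'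
      · exact Fin.ext (by omega)
      · rw [hCeq k₁ h₁'.symm, hCgt k₂ h₂'] at hk; exact absurd hk hp01
      · rw [hCgt k₁ h₁', hCeq k₂ h₂'.symm] at hk; exact absurd hk.symm hp01
      · exact Fin.ext (by omega)
  -- key index computations
  have hm1 : 1 < n - 2 := by omega
  have hmodsucc : ∀ x : ℕ, ((a + x) % (n-2) + 1) % (n-2) = (a + (x+1)) % (n-2) := by
    intro x
    rw [succ_mod hm1]
    ring_nf
  -- the adjacency of consecutive vertices
  have hCadj : ∀ k : Fin n, UAdj E (C k) (C (cnext k)) := by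
    intro k
    have hklt := k.isLt
    have hrange : k.val < n - 2 - 1 ∨ k.val = n - 2 - 1 ∨ k.val = n - 2 ∨ k.val = n - 1 := by
      omega
    rcases hrange with hk | hk | hk | hk
    · -- inside the cycle
      have hk' : k.val < n - 2 := by omega
      have hnk : (cnext k).val = k.val + 1 := by
        rw [hcnv, Nat.mod_eq_of_lt (by omega)]
      have hnk' : (cnext k).val < n - 2 := by omega
      rw [hClt k hk', hClt _ hnk']
      have h := hcadj ⟨(a + k.val) % (n - 2), Nat.mod_lt _ hmpos⟩
      have hcn : cnext (⟨(a + k.val) % (n - 2), Nat.mod_lt _ hmpos⟩ : Fin (n-2)) =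
          ⟨(a + (cnext k).val) % (n - 2), Nat.mod_lt _ hmpos⟩ := by
        apply Fin.ext
        show ((a + k.val) % (n-2) + 1) % (n-2) = (a + (cnext k).val) % (n-2)
        rw [hnk, hmodsucc]
      rwa [hcn] at h
    · -- last cycle vertex to p 0
      have hk' : k.val < n - 2 := by omega
      have hnk : (cnext k).val = n - 2 := by
        rw [hcnv, Nat.mod_eq_of_lt (by omega)]; omega
      rw [hClt k hk', hCeq _ hnk]
      have hidx : (⟨(a + k.val) % (n - 2), Nat.mod_lt _ hmpos⟩ : Fin (n-2)) = i₀ := by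
        apply Fin.ext
        show (a + k.val) % (n - 2) = i₀.val
        have : a + k.val = i₀.val + (n - 2) := by omega
        rw [this, Nat.add_mod_right, Nat.mod_eq_of_lt i₀.isLt]
      rw [hidx]
      exact hA₀.symm
    · -- p 0 to p 1
      have hnk : (cnext k).val = n - 1 := by
        rw [hcnv, Nat.mod_eq_of_lt (by omega)]; omega
      rw [hCeq k hk, hCgt _ (by omega : n - 2 < (cnext k).val)]
      exact Or.inl e01
    · -- p 1 back to start of the cycle
      have hnk : (cnext k).val = 0 := by
        rw [hcnv]
        have : k.val + 1 = n := by omega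
        rw [this, Nat.mod_self]
      rw [hCgt k (by omega), hClt _ (by omega : (cnext k).val < n - 2)]
      have hidx : (⟨(a + (cnext k).val) % (n - 2), Nat.mod_lt _ hmpos⟩ : Fin (n-2)) =
          cnext i₀ := by
        apply Fin.ext
        show (a + (cnext k).val) % (n - 2) = (i₀.val + 1) % (n - 2)
        rw [hnk]
      rw [hidx]
      exact hB₀
  -- count backward edges
  have hCnotm : ∀ k : Fin n, E (C (cnext k)) (C k) → k.val ≠ n - 2 := by
    intro k hk hkv
    have hnk : (cnext k).val = n - 1 := by
      rw [hcnv, Nat.mod_eq_of_lt (by omega)]; omega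
    rw [hCeq k hkv, hCgt _ (by omega : n - 2 < (cnext k).val)] at hk
    exact hE _ _ e01 hk
  have hback : ∀ k : Fin n, k.val < n - 2 - 1 → E (C (cnext k)) (C k) →
      E (c (cnext ⟨(a + k.val) % (n - 2), Nat.mod_lt _ hmpos⟩))
        (c ⟨(a + k.val) % (n - 2), Nat.mod_lt _ hmpos⟩) := by
    intro k hk hE'
    have hk' : k.val < n - 2 := by omega
    have hnk : (cnext k).val = k.val + 1 := by
      rw [hcnv, Nat.mod_eq_of_lt (by omega)]
    have hnk' : (cnext k).val < n - 2 := by omega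
    rw [hClt k hk', hClt _ hnk'] at hE'
    have hcn : cnext (⟨(a + k.val) % (n - 2), Nat.mod_lt _ hmpos⟩ : Fin (n-2)) =
        ⟨(a + (cnext k).val) % (n - 2), Nat.mod_lt _ hmpos⟩ := by
      apply Fin.ext
      show ((a + k.val) % (n-2) + 1) % (n-2) = (a + (cnext k).val) % (n-2)
      rw [hnk, hmodsucc]
    rw [hcn]
    exact hE'
  have hcount : sigmaMinusHC E C ≤ sigmaMinusCyc E c + 2 := by
    have hinj : Function.Injective
        (fun k : {k : Fin n // E (C (cnext k)) (C k)} =>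
          if h : k.val.val < n - 2 - 1 then
            (Sum.inl ⟨⟨(a + k.val.val) % (n - 2), Nat.mod_lt _ hmpos⟩, hback _ h k.prop⟩ :
              {j : Fin (n-2) // E (c (cnext j)) (c j)} ⊕ Fin 2)
          else if k.val.val = n - 2 - 1 then Sum.inr 0 else Sum.inr 1) := by
      intro k₁ k₂ hf
      have hb₁ := k₁.val.isLt
      have hb₂ := k₂.val.isLt
      have hne₁ := hCnotm _ k₁.prop
      have hne₂ := hCnotm _ k₂.prop
      dsimp only at hf
      have h01 : (0 : Fin 2) ≠ 1 := by decide
      split_ifs at hf with h1 h2 h3 h4 h5 h6 h7 h8 h9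
      all_goals try exact Sum.noConfusion hf
      all_goals try exact absurd (Sum.inr.inj hf) h01
      all_goals try exact absurd (Sum.inr.inj hf).symm h01
      · have hmm : (a + k₁.val.val) % (n-2) = (a + k₂.val.val) % (n-2) := by
          have := Sum.inl.inj hf
          exact congrArg Fin.val (congrArg Subtype.val this)
        exact Subtype.ext (Fin.ext (mod_add_cancel (by omega) (by omega) hmm))
      all_goals exact Subtype.ext (Fin.ext (by omega))
    calc sigmaMinusHC E C
        ≤ Nat.card ({j : Fin (n-2) // E (c (cnext j)) (c j)} ⊕ Fin 2) :=
          Nat.card_le_card_of_injective _ hinj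
      _ = sigmaMinusCyc E c + 2 := by
          rw [Nat.card_sum, Nat.card_eq_fintype_card (α := Fin 2), Fintype.card_fin]
          rfl
  refine ⟨C, ⟨Finite.injective_iff_bijective.mp hCinj, fun k _ => hCadj k⟩, ?_⟩
  calc sigmaMinHC E C ≤ sigmaMinusHC E C := min_le_right _ _
    _ ≤ sigmaMinusCyc E c + 2 := hcount
    _ ≤ ℓ := hσC
end

section
/- Let G be an oriented graph on n vertices with minimum degree δ(G) ≥ n/2 + 1. Let P be a path and C a cycle in G that are vertex-disjoint with V(G) = V(P) ∪ V(C), such that σ_min(P) ≤ 1 and 2 ≤ |P| < δ(G). If σ_min(C) ≤ ℓ − |P| for some natural number ℓ, then G contains a Hamilton cycle C* with σ_min(C*) ≤ ℓ. -/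
open Function

/-!
Treat `C` and `P` as vertex lists and count forward edges: reversing all edges if necessary,
`σ⁺(C) = σ_min(C)`, and reading `P` backwards if necessary, `σ⁺(P) = σ_min(P)`. A path `Q` is
absorbed into a cycle `Z` by splicing: both ends of `Q` have at least `δ - |Q| + 1` neighbours
on `Z`, and since `2δ ≥ n + 2` a cyclic counting argument gives positions `i` and `i + k` with
`1 ≤ k ≤ max 1 (|Q| - 2)` adjacent to the two ends. Replacing the `k - 1` vertices strictly
between them by `Q` creates at most two new forward edges and leaves a path shorter by at least
three to be absorbed next, for a total of `2⌈|P|/3⌉ ≤ |P| - σ⁺(P)`, except when `|P| = 4` and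
`σ⁺(P) = 1`. Then either a reordering of `P` with at most two forward edges fits between two
consecutive positions, or all the degree estimates are tight: `P` spans a tournament whose
vertices see the same alternating set of positions, and a Rédei path of it without forward
edges can be placed across two positions at distance two.
-/

namespace PathCycle

variable {V : Type*}

open Classical in
noncomputable def edgeCount (R : V → V → Prop) (a b : V) : ℕ := if R a b then 1 else 0

noncomputable def pathCount (R : V → V → Prop) : List V → ℕ
  | a :: b :: l => edgeCount R a b + pathCount R (b :: l)
  | _ => 0

noncomputable def cycleCount (R : V → V → Prop) (l : List V) : ℕ :=
  pathCount R (l ++ l.take 1)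

section Counting

variable (R : V → V → Prop)

lemma edgeCount_le_one (a b : V) : edgeCount R a b ≤ 1 := by
  unfold edgeCount; split <;> omega

variable {R} in
lemma edgeCount_eq_zero_iff {a b : V} : edgeCount R a b = 0 ↔ ¬ R a b := by
  unfold edgeCount; split <;> simp_all

@[simp] lemma pathCount_nil : pathCount R [] = 0 := rfl
@[simp] lemma pathCount_singleton (a : V) : pathCount R [a] = 0 := rfl
@[simp] lemma pathCount_cons_cons (a b : V) (l : List V) :
    pathCount R (a :: b :: l) = edgeCount R a b + pathCount R (b :: l) := rfl

lemma pathCount_append_cons (L : List V) (b : V) (M : List V) :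
    pathCount R (L ++ b :: M) = pathCount R (L ++ [b]) + pathCount R (b :: M) := by
  induction L with
  | nil => simp
  | cons a L ih =>
    cases L with
    | nil => simp
    | cons a' L' => simp only [List.cons_append, pathCount_cons_cons] at *; omega

lemma pathCount_cons_append_singleton {O : List V} {a b : V} (ha : O.head? = some a)
    (hb : O.getLast? = some b) (x y : V) :
    pathCount R (x :: O ++ [y]) = edgeCount R x a + pathCount R O + edgeCount R b y := by
  obtain ⟨O₁, rfl⟩ := List.head?_eq_some_iff.1 ha
  obtain ⟨O₂, hO₂⟩ := List.getLast?_eq_some_iff.1 hb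
  have h := pathCount_append_cons R (x :: O₂) b [y]
  have hx : x :: O₂ ++ [b] = x :: a :: O₁ := by rw [hO₂]; rfl
  have hxy : x :: O₂ ++ [b, y] = x :: a :: O₁ ++ [y] := by rw [← hx]; simp
  rw [hxy, hx] at h
  rw [h]
  simp

lemma pathCount_le_cons_append_singleton (x y : V) (S : List V) :
    pathCount R S ≤ pathCount R (x :: S ++ [y]) := by
  match S, S.head?_eq_some_head, S.getLast?_eq_some_getLast with
  | [], _, _ => simp
  | a :: S, ha, hb => rw [pathCount_cons_append_singleton R (ha (by simp)) (hb (by simp))]; omega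

lemma cycleCount_cons_append_cons (x y : V) (M T : List V) :
    cycleCount R (x :: (M ++ y :: T)) =
      pathCount R (x :: M ++ [y]) + pathCount R (y :: T ++ [x]) := by
  have h := pathCount_append_cons R (x :: M) y (T ++ [x])
  simp_all [cycleCount]

lemma cycleCount_rotate_one (l : List V) : cycleCount R (l.rotate 1) = cycleCount R l := by
  match l with
  | [] => simp
  | [a] => simp
  | a :: b :: l =>
    have h := pathCount_append_cons R (b :: l) a [b]
    simp_all [cycleCount, List.rotate_cons_succ]
    omega

lemma cycleCount_rotate (l : List V) (k : ℕ) : cycleCount R (l.rotate k) = cycleCount R l := by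
  induction k with
  | zero => simp
  | succ k ih => rw [← List.rotate_rotate, cycleCount_rotate_one, ih]

lemma pathCount_reverse (l : List V) : pathCount R l.reverse = pathCount (flip R) l := by
  induction l with
  | nil => simp
  | cons a l ih =>
    cases l with
    | nil => simp
    | cons b l =>
      have h := pathCount_append_cons R l.reverse b [a]
      have hflip : edgeCount (flip R) a b = edgeCount R b a := rfl
      simp only [List.reverse_cons, List.append_assoc, List.cons_append, List.nil_append] at h ih ⊢
      rw [h, ih, pathCount_cons_cons, pathCount_singleton, pathCount_cons_cons, hflip]
      omega

lemma pathCount_eq_zero_of_isChain {R S : V → V → Prop} (hRS : ∀ a b, S a b → ¬ R a b)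
    {l : List V} (hl : l.IsChain S) : pathCount R l = 0 := by
  induction hl with
  | nil => rfl
  | singleton => rfl
  | cons_cons hab _ ih => rw [pathCount_cons_cons, ih, edgeCount_eq_zero_iff.2 (hRS _ _ hab)]

end Counting

section Orientation

/-- A list is a path (cyclically: a cycle) of the underlying graph iff it has no consecutive
`NAdj` pair, so adjacency is tracked by the same counts as the edge directions. -/
def NAdj (E : V → V → Prop) (a b : V) : Prop := ¬ UAdj E a b

variable {E : V → V → Prop}

lemma _root_.Oriented.flip (hE : Oriented E) : Oriented (flip E) := fun a b h h' => hE a b h' h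

lemma uAdj_flip : UAdj (flip E) = UAdj E := by
  ext a b; exact or_comm

lemma _root_.Oriented.not_uAdj_self (hE : Oriented E) (a : V) : ¬ UAdj E a a :=
  fun h => h.elim (fun h => hE a a h h) (fun h => hE a a h h)

lemma pathCount_add_pathCount_flip (hE : Oriented E) {l : List V}
    (hl : pathCount (NAdj E) l = 0) : pathCount E l + pathCount (flip E) l = l.length - 1 := by
  induction l with
  | nil => rfl
  | cons a l ih =>
    cases l with
    | nil => rfl
    | cons b l =>
      rw [pathCount_cons_cons] at hl
      have hab : UAdj E a b :=
        not_not.1 (edgeCount_eq_zero_iff.1 (Nat.eq_zero_of_add_eq_zero_right hl))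
      have hsum : edgeCount E a b + edgeCount (flip E) a b = 1 := by
        rcases hab with h | h
        · simp [edgeCount, flip, h, hE a b h]
        · simp [edgeCount, flip, h, hE b a h]
      simp only [pathCount_cons_cons, List.length_cons] at ih ⊢
      have := ih (by omega)
      omega

lemma flip_nAdj : flip (NAdj E) = NAdj E := by
  ext a b; exact not_congr or_comm

lemma exists_perm_pathCount_eq_min {l : List V}
    (hl : pathCount (NAdj E) l = 0) :
    ∃ l', l'.Perm l ∧ pathCount (NAdj E) l' = 0 ∧
      pathCount E l' = min (pathCount E l) (pathCount (flip E) l) ∧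
      pathCount E l' ≤ pathCount (flip E) l' := by
  rcases le_total (pathCount E l) (pathCount (flip E) l) with h | h
  · exact ⟨l, .refl l, hl, (min_eq_left h).symm, h⟩
  · refine ⟨l.reverse, l.reverse_perm, ?_, ?_, ?_⟩
    · rwa [pathCount_reverse, flip_nAdj]
    · rw [pathCount_reverse, min_eq_right h]
    · rwa [pathCount_reverse, pathCount_reverse, flip_flip]

lemma pathCount_nAdj_eq_zero_of_pairwise {O : List V} (hO : O.Nodup)
    (hcomplete : ∀ x ∈ O, ∀ y ∈ O, x ≠ y → UAdj E x y) : pathCount (NAdj E) O = 0 :=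
  pathCount_eq_zero_of_isChain (fun _ _ h hn => hn h)
    (List.Pairwise.imp_of_mem (fun hx hy hxy => hcomplete _ hx _ hy hxy) hO).isChain

lemma pathCount_le_two_or_swap (hE : Oriented E) (a x y b : V) :
    pathCount E [a, x, y, b] ≤ 2 ∨ pathCount E [a, y, x, b] ≤ 2 := by
  have := edgeCount_le_one E a x
  have := edgeCount_le_one E y b
  have := edgeCount_le_one E a y
  have := edgeCount_le_one E x b
  by_cases hxy : E x y
  · have := edgeCount_eq_zero_iff.2 (hE x y hxy)
    simp only [pathCount_cons_cons, pathCount_singleton]; omega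
  · have := edgeCount_eq_zero_iff.2 hxy
    simp only [pathCount_cons_cons, pathCount_singleton]; omega

end Orientation

section Redei

variable {R : V → V → Prop}

lemma exists_perm_isChain_cons {v : V} :
    ∀ {l : List V}, l.IsChain R → (∀ x ∈ l, R v x ∨ R x v) →
      ∃ l' : List V, l'.Perm (v :: l) ∧ l'.IsChain R ∧ (l'.head? = some v ∨ l'.head? = l.head?)
  | [], _, _ => ⟨[v], .refl _, .singleton v, .inl rfl⟩
  | x :: l, hl, hv => by
    rcases hv x List.mem_cons_self with hvx | hxv
    · exact ⟨v :: x :: l, .refl _, hl.cons_cons hvx, .inl rfl⟩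
    obtain ⟨l', hperm, hchain, hhead⟩ :=
      exists_perm_isChain_cons hl.tail fun y hy => hv y (List.mem_cons_of_mem x hy)
    refine ⟨x :: l', (hperm.cons x).trans (.swap v x l), ?_, .inr rfl⟩
    refine List.isChain_cons.2 ⟨fun y hy => ?_, hchain⟩
    rcases hhead with h | h <;> rw [h, Option.mem_def] at hy
    · exact Option.some_inj.1 hy ▸ hxv
    · exact List.isChain_cons.1 hl |>.1 y hy

/-- Rédei's theorem: every tournament has a Hamiltonian path. -/
theorem exists_perm_isChain_of_total :
    ∀ {l : List V}, l.Nodup → (∀ x ∈ l, ∀ y ∈ l, x ≠ y → R x y ∨ R y x) →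
      ∃ l' : List V, l'.Perm l ∧ l'.IsChain R
  | [], _, _ => ⟨[], .nil, .nil⟩
  | v :: l, hnd, htot => by
    obtain ⟨hv, hnd⟩ := List.nodup_cons.1 hnd
    obtain ⟨l₁, hperm₁, hchain₁⟩ := exists_perm_isChain_of_total hnd
      fun x hx y hy => htot x (.tail v hx) y (.tail v hy)
    obtain ⟨l₂, hperm₂, hchain₂, -⟩ := exists_perm_isChain_cons (v := v) hchain₁
      fun x hx => htot v List.mem_cons_self x (.tail v (hperm₁.subset hx))
        fun h => hv (h ▸ hperm₁.subset hx)
    exact ⟨l₂, hperm₂.trans (hperm₁.cons v), hchain₂⟩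

end Redei

section OfFn

open Classical in
lemma natCard_subtype_eq_sum {k : ℕ} (R : V → V → Prop) (f g : Fin k → V) :
    Nat.card {i // R (f i) (g i)} = ∑ i, edgeCount R (f i) (g i) := by
  rw [Nat.card_eq_fintype_card, Fintype.card_subtype, Finset.card_filter]; rfl

lemma pathCount_ofFn (R : V → V → Prop) {m : ℕ} (p : Fin (m + 1) → V) :
    pathCount R (List.ofFn p) = Nat.card {i : Fin m // R (p i.castSucc) (p i.succ)} := by
  rw [natCard_subtype_eq_sum]
  induction m with
  | zero => simp
  | succ m ih =>
    rw [List.ofFn_succ, List.ofFn_succ, pathCount_cons_cons, ← List.ofFn_succ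
      (f := fun i => p i.succ), ih, Fin.sum_univ_succ]
    rfl

lemma cycleCount_ofFn (R : V → V → Prop) {q : ℕ} [NeZero q] (v : Fin q → V) :
    cycleCount R (List.ofFn v) = Nat.card {i : Fin q // R (v i) (v (cnext i))} := by
  obtain ⟨k, rfl⟩ : ∃ k, q = k + 1 := Nat.exists_eq_succ_of_ne_zero (NeZero.ne q)
  have hsnoc : List.ofFn v ++ (List.ofFn v).take 1 = List.ofFn (Fin.snoc v (v 0)) := by
    rw [List.ofFn_succ' (Fin.snoc v (v 0))]
    simp [List.ofFn_succ]
  rw [cycleCount, hsnoc, pathCount_ofFn]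
  refine Nat.card_congr (Equiv.subtypeEquivRight fun i => ?_)
  rw [Fin.snoc_castSucc]
  rcases Fin.eq_castSucc_or_eq_last i.succ with ⟨j, hj⟩ | hi
  · have : j = cnext i := by
      ext; have := congrArg Fin.val hj; simp at this; simp [cnext, this, Nat.mod_eq_of_lt j.isLt]
    rw [hj, Fin.snoc_castSucc, this]
  · have : cnext i = 0 := by
      ext; have := congrArg Fin.val hi; simp at this; simp [cnext, this]
    rw [hi, Fin.snoc_last, this]

lemma exists_isHamCycle_of_perm {n : ℕ} [NeZero n] {E : Fin n → Fin n → Prop} {L : List (Fin n)}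
    (hperm : L.Perm (List.finRange n)) (hL : cycleCount (NAdj E) L = 0) :
    ∃ C, IsHamCycle E C ∧ sigmaPlusHC E C = cycleCount E L := by
  have hlen : L.length = n := by simpa using hperm.length_eq
  obtain ⟨C, rfl⟩ : ∃ C : Fin n → Fin n, L = List.ofFn C :=
    ⟨fun i => L[i.cast hlen.symm], List.ext_get (by simp [hlen]) (by simp)⟩
  have hinj : Function.Injective C := List.nodup_ofFn.1 (hperm.nodup_iff.2 (List.nodup_finRange n))
  rw [cycleCount_ofFn] at hL ⊢
  have hadj := Finite.card_eq_zero_iff.1 hL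
  exact ⟨C, ⟨Finite.injective_iff_bijective.1 hinj,
    fun i _ => not_not.1 fun h => hadj.false ⟨i, h⟩⟩, rfl⟩

end OfFn

section CyclicShift

variable {z : ℕ}

lemma eq_univ_of_add_one_mem [NeZero z] {S : Finset (ZMod z)} {a : ZMod z} (ha : a ∈ S)
    (h : ∀ x ∈ S, x + 1 ∈ S) : S = Finset.univ := by
  have hk : ∀ k : ℕ, a + k ∈ S := by
    intro k
    induction k with
    | zero => simpa using ha
    | succ k ih => simpa [add_assoc] using h _ ih
  refine Finset.eq_univ_of_forall fun g => ?_
  simpa using hk (g - a).val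

lemma card_image_add_Icc [NeZero z] (A : Finset (ZMod z)) (hA : A.Nonempty) {e : ℕ} (he : 1 ≤ e) :
    let X := (A ×ˢ Finset.Icc 1 e).image fun p => p.1 + (p.2 : ZMod z)
    X = Finset.univ ∨ A.card + e - 1 ≤ X.card := by
  induction e, he using Nat.le_induction with
  | base =>
    refine .inr (Finset.card_le_card_of_injOn (· + 1) (fun a ha => ?_) fun a _ b _ h => ?_)
    · exact Finset.mem_image.2 ⟨(a, 1), by simpa using ha, by simp⟩
    · simpa using h
  | succ e he ih =>
    intro X'
    set X := (A ×ˢ Finset.Icc 1 e).image fun p => p.1 + (p.2 : ZMod z)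
    have hsub : X ⊆ X' := Finset.image_subset_image
      (Finset.product_subset_product_right (Finset.Icc_subset_Icc_right (by omega)))
    have hshift : ∀ x ∈ X, x + 1 ∈ X' := by
      simp only [X, X', Finset.mem_image, Finset.mem_product, Finset.mem_Icc]
      rintro _ ⟨⟨a, j⟩, ⟨ha, hj⟩, rfl⟩
      exact ⟨(a, j + 1), ⟨ha, by omega⟩, by push_cast; ring⟩
    rcases ih with huniv | hcard
    · exact .inl (Finset.eq_univ_of_forall fun x => hsub (huniv ▸ Finset.mem_univ x))
    by_cases hgrow : X'.card ≤ X.card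
    · have hX : X = X' := Finset.eq_of_subset_of_card_le hsub hgrow
      obtain ⟨a, ha⟩ := hA
      refine .inl (eq_univ_of_add_one_mem (a := a + 1) ?_ fun x hx => ?_)
      · exact hX ▸ Finset.mem_image.2 ⟨(a, 1), by simp [ha]; omega, by simp⟩
      · exact hX ▸ hshift x (hX ▸ hx)
    · exact .inr (by omega)

lemma exists_mem_add_mem_of_card [NeZero z] (A B : Finset (ZMod z)) {d : ℕ} (hd : 1 ≤ d)
    (hA : A.Nonempty) (hB : B.Nonempty) (hcard : z + 2 ≤ A.card + B.card + d) :
    ∃ i ∈ A, ∃ k : ℕ, 1 ≤ k ∧ k ≤ d ∧ i + (k : ZMod z) ∈ B := by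
  by_contra! hnone
  set X := (A ×ˢ Finset.Icc 1 d).image fun p => p.1 + (p.2 : ZMod z)
  have hdisj : Disjoint X B := by
    simp only [X, Finset.disjoint_left, Finset.mem_image, Finset.mem_product, Finset.mem_Icc]
    rintro _ ⟨⟨a, k⟩, ⟨ha, hk1, hkd⟩, rfl⟩
    exact hnone a ha k hk1 hkd
  have hXB : X.card + B.card ≤ z := by
    simpa [Finset.card_union_of_disjoint hdisj] using Finset.card_le_univ (X ∪ B)
  obtain huniv | hX : X = Finset.univ ∨ A.card + d - 1 ≤ X.card := card_image_add_Icc A hA hd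
  · obtain ⟨b, hb⟩ := hB
    exact Finset.disjoint_right.1 hdisj hb (huniv ▸ Finset.mem_univ b)
  · omega

lemma eq_of_forall_add_one_mem_iff {S T : Finset (ZMod z)}
    (h : ∀ i, i + 1 ∈ S ↔ i + 1 ∈ T) : S = T := by
  ext j; simpa using h (j - 1)

lemma eq_of_add_one_mem_iff_not_mem {S₁ S₂ S₃ S₄ : Finset (ZMod z)}
    (h₁₂ : ∀ i, i + 1 ∈ S₂ ↔ i ∉ S₁) (h₁₃ : ∀ i, i + 1 ∈ S₃ ↔ i ∉ S₁)
    (h₁₄ : ∀ i, i + 1 ∈ S₄ ↔ i ∉ S₁) (h₃₂ : ∀ i, i + 1 ∈ S₂ ↔ i ∉ S₃) :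
    S₂ = S₁ ∧ S₃ = S₁ ∧ S₄ = S₁ := by
  have h₃₁ : S₃ = S₁ := by ext j; exact not_iff_not.1 ((h₃₂ j).symm.trans (h₁₂ j))
  have h₂₃ : S₂ = S₃ := eq_of_forall_add_one_mem_iff fun i => (h₁₂ i).trans (h₁₃ i).symm
  have h₄₃ : S₄ = S₃ := eq_of_forall_add_one_mem_iff fun i => (h₁₄ i).trans (h₁₃ i).symm
  exact ⟨h₂₃.trans h₃₁, h₃₁, h₄₃.trans h₃₁⟩

end CyclicShift

section Positions

def cycGet (Z : List V) [NeZero Z.length] (i : ZMod Z.length) : V := Z[i.val]'(ZMod.val_lt i)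

open Classical in
noncomputable def adjPositions (E : V → V → Prop) (Z : List V) [NeZero Z.length] (v : V) :
    Finset (ZMod Z.length) :=
  Finset.univ.filter fun i => UAdj E v (cycGet Z i)

variable {E : V → V → Prop} {Z : List V} [NeZero Z.length]

lemma mem_adjPositions {v : V} {i : ZMod Z.length} :
    i ∈ adjPositions E Z v ↔ UAdj E v (cycGet Z i) := by
  simp [adjPositions]

lemma exists_cycGet_eq {y : V} (hy : y ∈ Z) : ∃ i, cycGet Z i = y := by
  obtain ⟨j, hj, rfl⟩ := List.mem_iff_getElem.1 hy
  exact ⟨j, by simp [cycGet, ZMod.val_natCast, Nat.mod_eq_of_lt hj]⟩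

lemma cycGet_injective (hZ : Z.Nodup) : Function.Injective (cycGet Z) := fun _ _ h =>
  ZMod.val_injective _ ((List.Nodup.getElem_inj_iff hZ).1 h)

open Classical in
lemma card_adjPositions [DecidableEq V] (hZ : Z.Nodup) (v : V) :
    (adjPositions E Z v).card = (Z.toFinset.filter (UAdj E v)).card := by
  rw [← Finset.card_image_of_injective _ (cycGet_injective hZ)]
  congr 1
  ext y
  simp only [Finset.mem_image, mem_adjPositions, Finset.mem_filter, List.mem_toFinset]
  constructor
  · rintro ⟨i, hi, rfl⟩
    exact ⟨List.getElem_mem _, hi⟩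
  · rintro ⟨hy, hvy⟩
    obtain ⟨i, rfl⟩ := exists_cycGet_eq hy
    exact ⟨i, hvy, rfl⟩

lemma rotate_eq_cons_append_cons (i : ZMod Z.length) {k : ℕ} (hk1 : 1 ≤ k) (hk : k < Z.length) :
    ∃ S T, Z.rotate i.val = cycGet Z i :: (S ++ cycGet Z (i + k) :: T) ∧ S.length = k - 1 := by
  set W := Z.rotate i.val
  have hW : W.length = Z.length := List.length_rotate ..
  refine ⟨(W.drop 1).take (k - 1), W.drop (k + 1), ?_, by simp; omega⟩
  have h0 : W[0]'(by omega) = cycGet Z i := by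
    simp [W, List.getElem_rotate, cycGet, Nat.mod_eq_of_lt (ZMod.val_lt i)]
  have hk' : W[k]'(by omega) = cycGet Z (i + k) := by
    simp [W, List.getElem_rotate, cycGet, ZMod.val_add, ZMod.val_natCast, add_comm]
  have hdrop : W.drop k = (W.drop 1).drop (k - 1) := by rw [List.drop_drop]; congr 1; omega
  rw [← h0, ← hk', ← List.drop_eq_getElem_cons, hdrop, List.take_append_drop,
    ← List.drop_eq_getElem_cons, List.drop_zero]

end Positions

section Splice

variable {E : V → V → Prop}

lemma splice {x y a b : V} {S T O : List V} (hZ : cycleCount (NAdj E) (x :: (S ++ y :: T)) = 0)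
    (hO : pathCount (NAdj E) O = 0) (ha : O.head? = some a) (hb : O.getLast? = some b)
    (hxa : UAdj E x a) (hby : UAdj E b y) :
    cycleCount (NAdj E) (x :: (O ++ y :: T)) = 0 ∧ pathCount (NAdj E) S = 0 ∧
      cycleCount E (x :: (O ++ y :: T)) + pathCount E S ≤
        cycleCount E (x :: (S ++ y :: T)) + pathCount E O + 2 := by
  simp only [cycleCount_cons_append_cons] at hZ ⊢
  rw [pathCount_cons_append_singleton _ ha hb, pathCount_cons_append_singleton _ ha hb]
  have hxa' := (edgeCount_eq_zero_iff (R := NAdj E)).2 (not_not.2 hxa)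
  have hby' := (edgeCount_eq_zero_iff (R := NAdj E)).2 (not_not.2 hby)
  have := pathCount_le_cons_append_singleton (NAdj E) x y S
  have := pathCount_le_cons_append_singleton E x y S
  have := edgeCount_le_one E x a
  have := edgeCount_le_one E b y
  omega

lemma exists_splice {Z O : List V} [NeZero Z.length] (hZ : cycleCount (NAdj E) Z = 0)
    (hO : pathCount (NAdj E) O = 0) {a b : V} (ha : O.head? = some a) (hb : O.getLast? = some b)
    {i : ZMod Z.length} {k : ℕ} (hk1 : 1 ≤ k) (hk : k < Z.length)
    (hi : i ∈ adjPositions E Z a) (hik : i + k ∈ adjPositions E Z b) :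
    ∃ Z' S, (Z' ++ S).Perm (Z ++ O) ∧ cycleCount (NAdj E) Z' = 0 ∧ pathCount (NAdj E) S = 0 ∧
      S.length = k - 1 ∧ 3 ≤ Z'.length ∧
      cycleCount E Z' + pathCount E S ≤ cycleCount E Z + pathCount E O + 2 := by
  obtain ⟨S, T, hrot, hS⟩ := rotate_eq_cons_append_cons i hk1 hk
  rw [← cycleCount_rotate _ Z i.val, hrot] at hZ ⊢
  obtain ⟨hZ', hS', hcount⟩ := splice hZ hO ha hb (mem_adjPositions.1 hi).symm
    (mem_adjPositions.1 hik)
  refine ⟨_, S, ?_, hZ', hS', hS, ?_, hcount⟩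
  · refine List.Perm.trans ?_ ((hrot ▸ Z.rotate_perm i.val).append_right O)
    classical
    simp only [List.perm_iff_count, List.count_append, List.count_cons, List.cons_append]
    omega
  · obtain ⟨O', rfl⟩ := List.head?_eq_some_iff.1 ha
    simp; omega

end Splice

section Degree

variable {n : ℕ} {E : Fin n → Fin n → Prop} {Z Q : List (Fin n)} [NeZero Z.length]

open Classical in
lemma udeg_le_card_adjPositions_add (hperm : (Z ++ Q).Perm (List.finRange n))
    (v : Fin n) :
    udeg E v ≤ (adjPositions E Z v).card + (Q.toFinset.filter (UAdj E v)).card := by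
  have hZ : Z.Nodup := (hperm.nodup_iff.2 (List.nodup_finRange n)).of_append_left
  rw [udeg, Nat.card_eq_fintype_card, Fintype.card_subtype, card_adjPositions hZ]
  have hsub : Finset.univ.filter (UAdj E v) ⊆
      Z.toFinset.filter (UAdj E v) ∪ Q.toFinset.filter (UAdj E v) := fun y hy => by
    rw [Finset.mem_filter] at hy
    rw [Finset.mem_union, Finset.mem_filter, Finset.mem_filter, List.mem_toFinset,
      List.mem_toFinset, ← or_and_right, ← List.mem_append, hperm.mem_iff]
    exact ⟨List.mem_finRange y, hy.2⟩
  exact (Finset.card_le_card hsub).trans (Finset.card_union_le _ _)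

open Classical in
lemma filter_uAdj_subset_erase (hE : Oriented E) (v : Fin n) :
    Q.toFinset.filter (UAdj E v) ⊆ Q.toFinset.erase v := fun y hy => by
  rw [Finset.mem_filter] at hy
  exact Finset.mem_erase.2 ⟨by rintro rfl; exact hE.not_uAdj_self y hy.2, hy.1⟩

open Classical in
lemma card_filter_uAdj_le_length_sub_one (hE : Oriented E) (hQ : Q.Nodup) {v : Fin n}
    (hv : v ∈ Q) : (Q.toFinset.filter (UAdj E v)).card ≤ Q.length - 1 := by
  refine (Finset.card_le_card (filter_uAdj_subset_erase hE v)).trans_eq ?_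
  rw [Finset.card_erase_of_mem (List.mem_toFinset.2 hv), List.toFinset_card_of_nodup hQ]

open Classical in
lemma uAdj_of_length_sub_one_le_card_filter (hE : Oriented E) (hQ : Q.Nodup) {v : Fin n}
    (hv : v ∈ Q) (h : Q.length - 1 ≤ (Q.toFinset.filter (UAdj E v)).card) {u : Fin n}
    (hu : u ∈ Q) (huv : u ≠ v) : UAdj E v u := by
  have heq := Finset.eq_of_subset_of_card_le (filter_uAdj_subset_erase hE v) (by
    rwa [Finset.card_erase_of_mem (List.mem_toFinset.2 hv), List.toFinset_card_of_nodup hQ])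
  have hu' : u ∈ Q.toFinset.erase v := Finset.mem_erase.2 ⟨huv, List.mem_toFinset.2 hu⟩
  exact (Finset.mem_filter.1 (heq ▸ hu')).2

lemma udeg_le_card_adjPositions_add_length (hE : Oriented E)
    (hperm : (Z ++ Q).Perm (List.finRange n)) {v : Fin n} (hv : v ∈ Q) :
    udeg E v ≤ (adjPositions E Z v).card + (Q.length - 1) :=
  (udeg_le_card_adjPositions_add hperm v).trans <| Nat.add_le_add_left
    (card_filter_uAdj_le_length_sub_one hE
      (hperm.nodup_iff.2 (List.nodup_finRange n)).of_append_right hv) _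

end Degree

section Insertion

variable {n δ : ℕ} {E : Fin n → Fin n → Prop}

def IsHamList (E : Fin n → Fin n → Prop) (L : List (Fin n)) : Prop :=
  L.Perm (List.finRange n) ∧ cycleCount (NAdj E) L = 0

/-- Each splice creates at most two forward edges and leaves a path at least three vertices
shorter (or none), whence the cost `2⌈|Q|/3⌉`. -/
theorem exists_isHamList_of_path (hE : Oriented E) (hδlb : ∀ x, δ ≤ udeg E x)
    (hδ : n + 2 ≤ 2 * δ) {Z Q : List (Fin n)} (hperm : (Z ++ Q).Perm (List.finRange n))
    (hZ : cycleCount (NAdj E) Z = 0) (hQ : pathCount (NAdj E) Q = 0) (hZ3 : 3 ≤ Z.length)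
    (hQδ : Q.length < δ) :
    ∃ L, IsHamList E L ∧
      cycleCount E L ≤ cycleCount E Z + pathCount E Q + 2 * ((Q.length + 2) / 3) := by
  induction hQlen : Q.length using Nat.strong_induction_on generalizing Z Q with
  | _ t ih =>
  rcases eq_or_ne Q [] with rfl | hQne
  · exact ⟨Z, ⟨by simpa using hperm, hZ⟩, by simp⟩
  have ha := List.head?_eq_some_head hQne
  have hb := List.getLast?_eq_some_getLast hQne
  have ht : 0 < t := hQlen ▸ List.length_pos_of_ne_nil hQne
  have : NeZero Z.length := ⟨by omega⟩
  have hn : Z.length + t = n := by simpa [hQlen] using hperm.length_eq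
  have hA := (hδlb _).trans (udeg_le_card_adjPositions_add_length hE hperm (List.head_mem hQne))
  have hB := (hδlb _).trans
    (udeg_le_card_adjPositions_add_length hE hperm (List.getLast_mem hQne))
  obtain ⟨i, hiA, k, hk1, hkd, hikB⟩ := exists_mem_add_mem_of_card
    (adjPositions E Z (Q.head hQne)) (adjPositions E Z (Q.getLast hQne))
    (d := max 1 (min (Z.length - 1) (t - 2))) (by omega)
    (Finset.card_pos.1 (by omega)) (Finset.card_pos.1 (by omega)) (by omega)
  obtain ⟨Z', S, hperm', hZ', hS, hSlen, hZ'3, hcost⟩ :=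
    exists_splice hZ hQ ha hb hk1 (by omega) hiA hikB
  obtain ⟨L, hL, hLcost⟩ :=
    ih S.length (by omega) (hperm'.trans hperm) hZ' hS hZ'3 (by omega) rfl
  exact ⟨L, hL, by omega⟩

theorem exists_isHamList_of_mem_adjPositions (hE : Oriented E) (hδlb : ∀ x, δ ≤ udeg E x)
    (hδ : n + 2 ≤ 2 * δ) {Z O : List (Fin n)} [NeZero Z.length]
    (hperm : (Z ++ O).Perm (List.finRange n)) (hZ : cycleCount (NAdj E) Z = 0)
    (hO : pathCount (NAdj E) O = 0) {a b : Fin n} (ha : O.head? = some a)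
    (hb : O.getLast? = some b) {i : ZMod Z.length} {k : ℕ} (hk1 : 1 ≤ k) (hk : k < Z.length)
    (hkδ : k ≤ δ) (hi : i ∈ adjPositions E Z a) (hik : i + k ∈ adjPositions E Z b) :
    ∃ L, IsHamList E L ∧
      cycleCount E L ≤ cycleCount E Z + pathCount E O + 2 + 2 * ((k + 1) / 3) := by
  obtain ⟨Z', S, hperm', hZ', hS, hSlen, hZ'3, hcost⟩ := exists_splice hZ hO ha hb hk1 hk hi hik
  obtain ⟨L, hL, hLcost⟩ :=
    exists_isHamList_of_path hE hδlb hδ (hperm'.trans hperm) hZ' hS hZ'3 (by omega)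
  exact ⟨L, hL, by omega⟩

end Insertion

section FourVertexPath

variable {n δ : ℕ} {E : Fin n → Fin n → Prop} {Z Q : List (Fin n)}

/-- The successors of the positions seen by `a` avoid those seen by `b`, so together the two
sets have at most `|Z|` elements; against the degree condition this leaves no slack at all. -/
lemma adjPositions_tight_of_forall_not_mem (hE : Oriented E) (hδlb : ∀ x, δ ≤ udeg E x)
    (hδ : n + 2 ≤ 2 * δ) [NeZero Z.length] (hperm : (Z ++ Q).Perm (List.finRange n))
    (hQ4 : Q.length = 4)
    {a b : Fin n} (ha : a ∈ Q) (hb : b ∈ Q)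
    (hab : ∀ i ∈ adjPositions E Z a, i + 1 ∉ adjPositions E Z b) :
    (∀ i, i + 1 ∈ adjPositions E Z b ↔ i ∉ adjPositions E Z a) ∧
      (∀ u ∈ Q, u ≠ a → UAdj E a u) ∧ (∀ u ∈ Q, u ≠ b → UAdj E b u) := by
  have hQ : Q.Nodup := (hperm.nodup_iff.2 (List.nodup_finRange n)).of_append_right
  have hn : Z.length + 4 = n := by simpa [hQ4] using hperm.length_eq
  have hdega := (hδlb a).trans (udeg_le_card_adjPositions_add hperm a)
  have hdegb := (hδlb b).trans (udeg_le_card_adjPositions_add hperm b)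
  have hNa := card_filter_uAdj_le_length_sub_one hE hQ ha
  have hNb := card_filter_uAdj_le_length_sub_one hE hQ hb
  set A := adjPositions E Z a
  set B := adjPositions E Z b
  have hinj : Function.Injective (· + 1 : ZMod Z.length → ZMod Z.length) := add_left_injective 1
  have hdisj : Disjoint (A.image (· + 1)) B := by
    simp only [Finset.disjoint_left, Finset.mem_image]
    rintro _ ⟨i, hi, rfl⟩
    exact hab i hi
  have hAB : A.card + B.card ≤ Z.length := by
    have h := Finset.card_le_univ (A.image (· + 1) ∪ B)
    rwa [Finset.card_union_of_disjoint hdisj, Finset.card_image_of_injective _ hinj,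
      ZMod.card] at h
  have hcover : A.image (· + 1) ∪ B = Finset.univ :=
    Finset.eq_univ_of_card _ (by
      rw [Finset.card_union_of_disjoint hdisj, Finset.card_image_of_injective _ hinj, ZMod.card]
      omega)
  refine ⟨fun i => ⟨fun h hi => hab i hi h, fun hi => ?_⟩,
    fun u hu hua => uAdj_of_length_sub_one_le_card_filter hE hQ ha (by omega) hu hua,
    fun u hu hub => uAdj_of_length_sub_one_le_card_filter hE hQ hb (by omega) hu hub⟩
  rcases Finset.mem_union.1 (hcover ▸ Finset.mem_univ (i + 1)) with h | h
  · obtain ⟨j, hj, hji⟩ := Finset.mem_image.1 h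
    exact absurd (hinj hji ▸ hj) hi
  · exact h

/-- When every vertex of `Q` sees the same alternating set of cycle positions, a Rédei path of
the tournament on `Q` without forward edges bridges two positions at distance two; the vertex it
displaces is reinserted at cost two. -/
theorem exists_isHamList_of_tournament (hE : Oriented E) (hδlb : ∀ x, δ ≤ udeg E x)
    (hδ : n + 2 ≤ 2 * δ) [NeZero Z.length] (hperm : (Z ++ Q).Perm (List.finRange n))
    (hZ : cycleCount (NAdj E) Z = 0) (hZ3 : 3 ≤ Z.length) (hQne : Q ≠ [])
    (hcomplete : ∀ x ∈ Q, ∀ y ∈ Q, x ≠ y → UAdj E x y) {P : Finset (ZMod Z.length)}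
    (hP : ∀ v ∈ Q, adjPositions E Z v = P) (hshift : ∀ i, i + 1 ∈ P ↔ i ∉ P)
    (hPne : P.Nonempty) :
    ∃ L, IsHamList E L ∧ cycleCount E L ≤ cycleCount E Z + 4 := by
  obtain ⟨j, hj⟩ := hPne
  have hj2 : j + (2 : ℕ) ∈ P := by
    have h1 : j + 1 ∉ P := fun h => (hshift j).1 h hj
    simpa [add_assoc, one_add_one_eq_two] using (hshift (j + 1)).2 h1
  have hQ : Q.Nodup := (hperm.nodup_iff.2 (List.nodup_finRange n)).of_append_right
  have hn : Z.length + Q.length = n := by simpa using hperm.length_eq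
  have hQpos := List.length_pos_of_ne_nil hQne
  obtain ⟨O, hOQ, hchain⟩ := exists_perm_isChain_of_total (R := flip E) hQ
    fun x hx y hy hxy => (hcomplete x hx y hy hxy).symm
  have hO : pathCount (NAdj E) O = 0 :=
    pathCount_eq_zero_of_isChain (fun _ _ h hn => hn (.inr h)) hchain
  have hOE : pathCount E O = 0 := pathCount_eq_zero_of_isChain (fun a b h => hE b a h) hchain
  have hOne : O ≠ [] := fun h => hQne (List.Perm.nil_eq (h ▸ hOQ)).symm
  obtain ⟨L, hL, hcost⟩ := exists_isHamList_of_mem_adjPositions hE hδlb hδ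
    ((hOQ.append_left Z).trans hperm) hZ hO (List.head?_eq_some_head hOne)
    (List.getLast?_eq_some_getLast hOne) (k := 2) (by norm_num) (by omega) (by omega) (hP _ (hOQ.subset (List.head_mem hOne)) ▸ hj)
    (hP _ (hOQ.subset (List.getLast_mem hOne)) ▸ hj2)
  exact ⟨L, hL, by omega⟩

lemma exists_perm_cons_cons_cons [DecidableEq V] {Q : List V} (hQ4 : Q.length = 4) {a b : V}
    (ha : a ∈ Q) (hb : b ∈ Q) (hab : a ≠ b) : ∃ x y, [a, x, y, b].Perm Q := by
  have hb' : b ∈ Q.erase a := (List.mem_erase_of_ne hab.symm).2 hb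
  have hQ' := (List.perm_cons_erase ha).trans ((List.perm_cons_erase hb').cons a)
  have hlen : ((Q.erase a).erase b).length = 2 := by
    rw [List.length_erase_of_mem hb', List.length_erase_of_mem ha, hQ4]
  obtain ⟨x, y, hxy⟩ := List.length_eq_two.1 hlen
  rw [hxy] at hQ'
  refine ⟨x, y, List.Perm.symm (hQ'.trans ?_)⟩
  exact .cons a (by simp [List.perm_iff_count, List.count_cons]; omega)

lemma not_mem_adjPositions_add_one_of_complete [NeZero Z.length] (hE : Oriented E)
    (hQ : Q.Nodup) (hQ4 : Q.length = 4) (hcomplete : ∀ x ∈ Q, ∀ y ∈ Q, x ≠ y → UAdj E x y)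
    (hblocked : ∀ O, O.Perm Q → pathCount (NAdj E) O = 0 → pathCount E O ≤ 2 →
      ∀ {a b}, O.head? = some a → O.getLast? = some b →
        ∀ i ∈ adjPositions E Z a, i + 1 ∉ adjPositions E Z b)
    {a b : Fin n} (ha : a ∈ Q) (hb : b ∈ Q) (hab : a ≠ b) :
    ∀ i ∈ adjPositions E Z a, i + 1 ∉ adjPositions E Z b := by
  obtain ⟨x, y, hxy⟩ := exists_perm_cons_cons_cons hQ4 ha hb hab
  have hyx : [a, y, x, b].Perm Q := (List.Perm.cons a (.swap x y [b])).trans hxy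
  have hpath : ∀ O, O.Perm Q → pathCount (NAdj E) O = 0 := fun O hO =>
    pathCount_nAdj_eq_zero_of_pairwise (hO.nodup_iff.2 hQ) fun u hu v hv =>
      hcomplete u (hO.subset hu) v (hO.subset hv)
  rcases pathCount_le_two_or_swap hE a x y b with h | h
  · exact hblocked _ hxy (hpath _ hxy) h rfl rfl
  · exact hblocked _ hyx (hpath _ hyx) h rfl rfl

lemma complete_of_uAdj_ends {u₁ u₂ u₃ u₄ : Fin n} (h₂₃ : UAdj E u₂ u₃)
    (h₁ : ∀ u ∈ [u₁, u₂, u₃, u₄], u ≠ u₁ → UAdj E u₁ u)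
    (h₄ : ∀ u ∈ [u₁, u₂, u₃, u₄], u ≠ u₄ → UAdj E u₄ u) :
    ∀ x ∈ [u₁, u₂, u₃, u₄], ∀ y ∈ [u₁, u₂, u₃, u₄], x ≠ y → UAdj E x y := by
  intro x hx y hy hxy
  simp only [List.mem_cons, List.not_mem_nil, or_false] at hx hy
  rcases hx with rfl | rfl | rfl | rfl <;> rcases hy with rfl | rfl | rfl | rfl <;>
    first
    | exact absurd rfl hxy
    | exact h₁ _ (by simp) hxy.symm
    | exact (h₁ _ (by simp) hxy).symm
    | exact h₄ _ (by simp) hxy.symm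
    | exact (h₄ _ (by simp) hxy).symm
    | exact h₂₃
    | exact h₂₃.symm

/-- For `|Q| = 4` the general bound `2⌈|Q|/3⌉` is one too large when `σ⁺(Q) = 1`. Unless some
reordering of `Q` with at most two forward edges fits between consecutive cycle positions, the
degree condition forces `Q` to span a tournament whose vertices all see the same alternating set
of cycle positions. -/
theorem exists_isHamList_of_length_four (hE : Oriented E) (hδlb : ∀ x, δ ≤ udeg E x)
    (hδ : n + 2 ≤ 2 * δ) (hperm : (Z ++ Q).Perm (List.finRange n))
    (hZ : cycleCount (NAdj E) Z = 0) (hQ : pathCount (NAdj E) Q = 0) (hZ3 : 3 ≤ Z.length)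
    (hQ4 : Q.length = 4) (hQE : pathCount E Q ≤ 2) :
    ∃ L, IsHamList E L ∧ cycleCount E L ≤ cycleCount E Z + 4 := by
  have : NeZero Z.length := ⟨by omega⟩
  have hn : Z.length + 4 = n := by simpa [hQ4] using hperm.length_eq
  have hQnd : Q.Nodup := (hperm.nodup_iff.2 (List.nodup_finRange n)).of_append_right
  by_contra! hfail
  have hblocked : ∀ O, O.Perm Q → pathCount (NAdj E) O = 0 → pathCount E O ≤ 2 →
      ∀ {a b}, O.head? = some a → O.getLast? = some b →
        ∀ i ∈ adjPositions E Z a, i + 1 ∉ adjPositions E Z b := by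
    intro O hOQ hO hOE a b ha hb i hi hi1
    obtain ⟨L, hL, hcost⟩ := exists_isHamList_of_mem_adjPositions hE hδlb hδ
      ((hOQ.append_left Z).trans hperm) hZ hO ha hb le_rfl (by omega) (by omega) hi
      (by simpa using hi1)
    exact (hfail L hL).not_ge (by omega)
  have hrigid := fun {a b} ha hb hab =>
    adjPositions_tight_of_forall_not_mem hE hδlb hδ hperm hQ4 (a := a) (b := b) ha hb hab
  obtain ⟨u₁, u₂, u₃, u₄, rfl⟩ := List.length_eq_four.1 hQ4
  obtain ⟨e₁₄, h₁, h₄⟩ := hrigid (a := u₁) (b := u₄) (by simp) (by simp)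
    (hblocked _ (.refl _) hQ hQE rfl rfl)
  have h₂₃ : UAdj E u₂ u₃ := by
    simp only [pathCount_cons_cons, pathCount_singleton] at hQ
    exact not_not.1 ((edgeCount_eq_zero_iff (R := NAdj E)).1 (by omega))
  have hcomplete := complete_of_uAdj_ends h₂₃ h₁ h₄
  have e : ∀ a ∈ [u₁, u₂, u₃, u₄], ∀ b ∈ [u₁, u₂, u₃, u₄], a ≠ b →
      ∀ i, i + 1 ∈ adjPositions E Z b ↔ i ∉ adjPositions E Z a := fun a ha b hb hab =>
    (hrigid ha hb (not_mem_adjPositions_add_one_of_complete hE hQnd hQ4 hcomplete hblocked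
      ha hb hab)).1
  simp only [List.nodup_cons, List.mem_cons, List.not_mem_nil, or_false, not_or] at hQnd
  obtain ⟨⟨h₁₂, h₁₃, h₁₄⟩, ⟨h₂₃', h₂₄⟩, h₃₄, -⟩ := hQnd
  obtain ⟨hP₂, hP₃, hP₄⟩ := eq_of_add_one_mem_iff_not_mem (e u₁ (by simp) u₂ (by simp) h₁₂)
    (e u₁ (by simp) u₃ (by simp) h₁₃) e₁₄ (e u₃ (by simp) u₂ (by simp) (Ne.symm h₂₃'))
  have hdeg := (hδlb u₁).trans (udeg_le_card_adjPositions_add_length hE hperm (by simp))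
  obtain ⟨L, hL, hcost⟩ := exists_isHamList_of_tournament hE hδlb hδ hperm hZ hZ3 (by simp)
    hcomplete (P := adjPositions E Z u₁) (by simp [hP₂, hP₃, hP₄])
    (hP₂ ▸ e u₁ (by simp) u₂ (by simp) h₁₂) (Finset.card_pos.1 (by simp at hdeg; omega))
  exact (hfail L hL).not_ge hcost

end FourVertexPath

section Assembly

variable {n δ : ℕ} {E : Fin n → Fin n → Prop}

theorem exists_isHamList_of_pathCount_le_one (hE : Oriented E) (hδlb : ∀ x, δ ≤ udeg E x)
    (hδ : n + 2 ≤ 2 * δ) {Z Q : List (Fin n)} (hperm : (Z ++ Q).Perm (List.finRange n))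
    (hZ : cycleCount (NAdj E) Z = 0) (hQ : pathCount (NAdj E) Q = 0) (hZ3 : 3 ≤ Z.length)
    (hQ2 : 2 ≤ Q.length) (hQδ : Q.length < δ) (hQE : pathCount E Q ≤ 1)
    (hQflip : pathCount E Q ≤ pathCount (flip E) Q) :
    ∃ L, IsHamList E L ∧ cycleCount E L ≤ cycleCount E Z + Q.length := by
  have hsum := pathCount_add_pathCount_flip hE hQ
  by_cases h4 : Q.length = 4
  · obtain ⟨L, hL, hcost⟩ :=
      exists_isHamList_of_length_four hE hδlb hδ hperm hZ hQ hZ3 h4 (by omega)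
    exact ⟨L, hL, by omega⟩
  · obtain ⟨L, hL, hcost⟩ := exists_isHamList_of_path hE hδlb hδ hperm hZ hQ hZ3 hQδ
    exact ⟨L, hL, by omega⟩

lemma perm_finRange_of_injective {k l : ℕ} {c : Fin k → Fin n} {p : Fin l → Fin n}
    (hc : Function.Injective c) (hp : Function.Injective p) (hdisj : ∀ i j, c i ≠ p j)
    (hcover : ∀ x : Fin n, (∃ i, c i = x) ∨ (∃ j, p j = x)) :
    (List.ofFn c ++ List.ofFn p).Perm (List.finRange n) := by
  refine List.perm_of_nodup_nodup_toFinset_eq ?_ (List.nodup_finRange n) ?_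
  · refine List.nodup_append.2 ⟨List.nodup_ofFn.2 hc, List.nodup_ofFn.2 hp, ?_⟩
    simp only [List.mem_ofFn]
    rintro _ ⟨i, rfl⟩ _ ⟨j, rfl⟩
    exact hdisj i j
  · ext x
    simp only [List.mem_toFinset, List.mem_append, List.mem_ofFn, List.mem_finRange, iff_true]
    exact hcover x

theorem exists_isHamCycle_sigmaPlusHC_le {m : ℕ} (hE : Oriented E)
    (hδlb : ∀ x, δ ≤ udeg E x) (hδ : n + 2 ≤ 2 * δ) {p : Fin (m + 1) → Fin n}
    (hp : IsPathOn E p) (hpσ : sigmaMinPath E p ≤ 1) (hP1 : 2 ≤ m + 1) (hP2 : m + 1 < δ)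
    {c : Fin (n - (m + 1)) → Fin n} (hc : IsCycleOn E c) (hdisj : ∀ i j, c i ≠ p j)
    (hcover : ∀ x : Fin n, (∃ i, c i = x) ∨ (∃ j, p j = x)) :
    ∃ C, IsHamCycle E C ∧ sigmaPlusHC E C ≤ sigmaPlusCyc E c + (m + 1) := by
  obtain ⟨hc3, hcinj, hcadj⟩ := hc
  obtain ⟨hpinj, hpadj⟩ := hp
  have : NeZero (n - (m + 1)) := ⟨by omega⟩
  have : NeZero n := ⟨by omega⟩
  have hZ : cycleCount (NAdj E) (List.ofFn c) = 0 := by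
    rw [cycleCount_ofFn]; exact Finite.card_eq_zero_iff.2 ⟨fun ⟨i, hi⟩ => hi (hcadj i)⟩
  have hP : pathCount (NAdj E) (List.ofFn p) = 0 := by
    rw [pathCount_ofFn]; exact Finite.card_eq_zero_iff.2 ⟨fun ⟨i, hi⟩ => hi (hpadj i)⟩
  obtain ⟨Q, hQP, hQ, hQE, hQflip⟩ := exists_perm_pathCount_eq_min hP
  rw [pathCount_ofFn, pathCount_ofFn] at hQE
  have hQlen : Q.length = m + 1 := by rw [hQP.length_eq, List.length_ofFn]
  obtain ⟨L, hL, hcost⟩ := exists_isHamList_of_pathCount_le_one hE hδlb hδ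
    ((hQP.append_left _).trans (perm_finRange_of_injective hcinj hpinj hdisj hcover)) hZ hQ
    (by simpa using hc3) (by omega) (by omega) (hQE ▸ hpσ) hQflip
  obtain ⟨C, hC, hCσ⟩ := exists_isHamCycle_of_perm hL.1 hL.2
  rw [hQlen, cycleCount_ofFn] at hcost
  exact ⟨C, hC, hCσ ▸ hcost⟩

end Assembly

end PathCycle

/-- **Lemma 2.1.** `δ(G) ≥ n/2 + 1`, `P` a path and `C` a cycle, vertex-disjoint
and spanning, with `σ_min(P) ≤ 1` and `2 ≤ |P| < δ(G)`. If `σ_min(C) ≤ ℓ - |P|`,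
then `G` has a Hamilton cycle `C*` with `σ_min(C*) ≤ ℓ`. Here `|P| = m + 1`. -/
theorem path_cycle_lemma (n ℓ δ m : ℕ)
    (E : Fin n → Fin n → Prop) (hE : Oriented E)
    (hδlb : ∀ x : Fin n, δ ≤ udeg E x) (hδ : n + 2 ≤ 2 * δ)
    (p : Fin (m + 1) → Fin n) (hp : IsPathOn E p)
    (hpσ : sigmaMinPath E p ≤ 1)
    (hP1 : 2 ≤ m + 1) (hP2 : m + 1 < δ)
    (c : Fin (n - (m + 1)) → Fin n) (hc : IsCycleOn E c)
    (hdisj : ∀ i j, c i ≠ p j)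
    (hcover : ∀ x : Fin n, (∃ i, c i = x) ∨ (∃ j, p j = x))
    (hσC : sigmaMinCyc E c + (m + 1) ≤ ℓ) :
    ∃ C : Fin n → Fin n, IsHamCycle E C ∧ sigmaMinHC E C ≤ ℓ := by
  rcases le_total (sigmaPlusCyc E c) (sigmaMinusCyc E c) with h | h
  · obtain ⟨C, hC, hCσ⟩ := PathCycle.exists_isHamCycle_sigmaPlusHC_le hE hδlb hδ hp hpσ hP1 hP2 hc
      hdisj hcover
    rw [sigmaMinCyc, min_eq_left h] at hσC
    exact ⟨C, hC, (min_le_left _ _).trans (hCσ.trans hσC)⟩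
  · -- reversing every edge swaps forward and backward edges and keeps the underlying graph
    have hu := PathCycle.uAdj_flip (E := E)
    obtain ⟨C, hC, hCσ⟩ := PathCycle.exists_isHamCycle_sigmaPlusHC_le (E := flip E) hE.flip
      (by simpa only [udeg, hu] using hδlb) hδ (by simpa only [IsPathOn, hu] using hp)
      (by rwa [sigmaMinPath, min_comm]) hP1 hP2 (by simpa only [IsCycleOn, hu] using hc) hdisj
      hcover
    rw [sigmaMinCyc, min_eq_right h] at hσC
    exact ⟨C, by simpa only [IsHamCycle, hu] using hC, (min_le_right _ _).trans (hCσ.trans hσC)⟩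
end

section
/- Let G be an oriented graph on n vertices with underlying minimum degree δ(G) ≥ n/2 + 1. Let P = u_1 u_2 u_3 be a path and C = v_1...v_{n−3} v_1 a cycle, vertex-disjoint with V(G) = V(P) ∪ V(C), σ^-(P) ≤ 1 and σ^-(C) ≤ ℓ − 3. Then G contains a Hamilton cycle C* with σ_min(C*) ≤ ℓ. -/
open Function

/-!
Open `C` at an edge `vᵢvᵢ₊₁` and run through `P` in between: this is a Hamilton cycle as soon as
`vᵢ ∼ u₁` and `u₃ ∼ vᵢ₊₁`. Such an `i` exists by pigeonhole, since `u₁` has at least `δ - 2`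
neighbours `vᵢ` on `C`, `u₃` has at least `δ - 2` neighbours `vᵢ₊₁`, and `2(δ - 2) ≥ n - 2 > |C|`.
The new cycle is the path `C - vᵢvᵢ₊₁`, then `P`, plus two connecting edges, so it has at most
`σ⁻(C) + σ⁻(P) + 2 ≤ ℓ` backward edges.
-/

section Sequences
variable {α : Type*}

theorem cnext_castSucc {N : ℕ} (t : Fin N) : cnext t.castSucc = t.succ :=
  Fin.ext (Nat.mod_eq_of_lt (by simp))

theorem cnext_last (N : ℕ) : cnext (Fin.last N) = 0 :=
  Fin.ext (by simp [cnext])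

theorem cnext_eq_add_one {m : ℕ} [NeZero m] (i : Fin m) : cnext i = i + 1 := by
  ext; simp [cnext, Fin.val_add]

theorem forall_cnext_iff {N : ℕ} (R : α → α → Prop) (g : Fin (N + 1) → α) :
    (∀ j, R (g j) (g (cnext j))) ↔
      (∀ t : Fin N, R (g t.castSucc) (g t.succ)) ∧ R (g (Fin.last N)) (g 0) := by
  simp only [Fin.forall_fin_succ', cnext_castSucc, cnext_last]

open Classical in
theorem card_cnext_eq {N : ℕ} (R : α → α → Prop) (g : Fin (N + 1) → α) :
    Nat.card {j // R (g j) (g (cnext j))} =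
      Nat.card {t : Fin N // R (g t.castSucc) (g t.succ)} +
        if R (g (Fin.last N)) (g 0) then 1 else 0 := by
  simp only [Nat.card_eq_fintype_card, Fintype.card_subtype, Finset.card_filter,
    Fin.sum_univ_castSucc, cnext_castSucc, cnext_last]

theorem card_cnext_comp_add_left {m : ℕ} [NeZero m] (R : α → α → Prop) (c : Fin m → α)
    (r : Fin m) :
    Nat.card {j // R (c (r + j)) (c (r + cnext j))} = Nat.card {j // R (c j) (c (cnext j))} :=
  Nat.card_congr <| (Equiv.addLeft r).subtypeEquiv fun j => by
    simp [cnext_eq_add_one, add_assoc]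

section Append
variable {m k : ℕ} (a : Fin (m + 1) → α) (b : Fin (k + 1) → α)

theorem append_castSucc_castAdd (s : Fin (m + 1)) :
    Fin.append a b (Fin.castAdd k s).castSucc = a s := by
  rw [Fin.castSucc_castAdd, Fin.append_left]

theorem append_succ_castAdd_castSucc (s : Fin m) :
    Fin.append a b (Fin.castAdd k s.castSucc).succ = a s.succ := by
  rw [← Fin.append_left a b s.succ]; congr 1

theorem append_succ_castAdd_last :
    Fin.append a b (Fin.castAdd k (Fin.last m)).succ = b 0 := by
  rw [← Fin.append_right a b 0]; congr 1

theorem append_castSucc_natAdd (s : Fin k) :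
    Fin.append a b (Fin.natAdd (m + 1) s).castSucc = b s.castSucc := by
  rw [← Fin.append_right a b]; congr 1

theorem append_succ_natAdd (s : Fin k) :
    Fin.append a b (Fin.natAdd (m + 1) s).succ = b s.succ := by
  rw [← Fin.append_right a b]; congr 1

theorem forall_append_iff (R : α → α → Prop) :
    (∀ t : Fin (m + 1 + k), R (Fin.append a b t.castSucc) (Fin.append a b t.succ)) ↔
      (∀ s : Fin m, R (a s.castSucc) (a s.succ)) ∧ R (a (Fin.last m)) (b 0) ∧
        ∀ s : Fin k, R (b s.castSucc) (b s.succ) := by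
  simp only [Fin.forall_fin_add, Fin.forall_iff_castSucc, append_castSucc_castAdd,
    append_succ_castAdd_castSucc, append_succ_castAdd_last, append_castSucc_natAdd,
    append_succ_natAdd]
  tauto

open Classical in
theorem card_append_eq (R : α → α → Prop) :
    Nat.card {t : Fin (m + 1 + k) // R (Fin.append a b t.castSucc) (Fin.append a b t.succ)} =
      Nat.card {s : Fin m // R (a s.castSucc) (a s.succ)} +
        (if R (a (Fin.last m)) (b 0) then 1 else 0) +
          Nat.card {s : Fin k // R (b s.castSucc) (b s.succ)} := by
  simp only [Nat.card_eq_fintype_card, Fintype.card_subtype, Finset.card_filter,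
    Fin.sum_univ_add, Fin.sum_univ_castSucc, append_castSucc_castAdd,
    append_succ_castAdd_castSucc, append_succ_castAdd_last, append_castSucc_natAdd,
    append_succ_natAdd]

end Append

end Sequences

theorem UAdj.symm {V : Type*} {E : V → V → Prop} {u v : V} (h : UAdj E u v) : UAdj E v u :=
  Or.symm h

theorem Oriented.not_uAdj_self_s15 {V : Type*} {E : V → V → Prop} (hE : Oriented E) (x : V) :
    ¬ UAdj E x x :=
  fun h => h.elim (fun h' => hE x x h' h') (fun h' => hE x x h' h')

section CyclesAndPaths
variable {n : ℕ} {E : Fin n → Fin n → Prop}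

theorem IsCycleOn.comp_add_left {m : ℕ} [NeZero m] {c : Fin m → Fin n} (hc : IsCycleOn E c)
    (r : Fin m) : IsCycleOn E (fun j => c (r + j)) :=
  ⟨hc.1, hc.2.1.comp (add_right_injective r), fun j => by
    simpa [cnext_eq_add_one, add_assoc] using hc.2.2 (r + j)⟩

theorem sigmaMinusCyc_comp_add_left {m : ℕ} [NeZero m] (c : Fin m → Fin n) (r : Fin m) :
    sigmaMinusCyc E (fun j => c (r + j)) = sigmaMinusCyc E c :=
  card_cnext_comp_add_left (fun x y => E y x) c r

theorem isCycleOn_iff_isPathOn {N : ℕ} (hN : 2 ≤ N) (g : Fin (N + 1) → Fin n) :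
    IsCycleOn E g ↔ IsPathOn E g ∧ UAdj E (g (Fin.last N)) (g 0) := by
  simp only [IsCycleOn, IsPathOn, forall_cnext_iff (UAdj E) g, show 3 ≤ N + 1 by omega,
    true_and, and_assoc]

open Classical in
theorem sigmaMinusCyc_eq_sigmaMinusPath_add {N : ℕ} (g : Fin (N + 1) → Fin n) :
    sigmaMinusCyc E g = sigmaMinusPath E g + if E (g 0) (g (Fin.last N)) then 1 else 0 :=
  card_cnext_eq (fun x y => E y x) g

theorem IsCycleOn.isHamCycle {c : Fin n → Fin n} (hc : IsCycleOn E c) : IsHamCycle E c :=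
  ⟨Finite.injective_iff_bijective.mp hc.2.1, fun i _ => hc.2.2 i⟩

section Append
variable {m k : ℕ} {a : Fin (m + 1) → Fin n} {b : Fin (k + 1) → Fin n}

theorem IsPathOn.append (ha : IsPathOn E a) (hb : IsPathOn E b)
    (hab : UAdj E (a (Fin.last m)) (b 0)) (hdisj : ∀ i j, a i ≠ b j) :
    IsPathOn E (Fin.append a b :) :=
  ⟨Fin.append_injective_iff.2 ⟨ha.1, hb.1, hdisj⟩,
    (forall_append_iff a b (UAdj E)).2 ⟨ha.2, hab, hb.2⟩⟩

open Classical in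
theorem sigmaMinusPath_append :
    sigmaMinusPath E (Fin.append a b :) =
      sigmaMinusPath E a + (if E (b 0) (a (Fin.last m)) then 1 else 0) + sigmaMinusPath E b :=
  card_append_eq a b (fun x y => E y x)

end Append

theorem IsCycleOn.exists_insert_path {m k : ℕ} {c : Fin (m + 1) → Fin n} (hc : IsCycleOn E c)
    {p : Fin (k + 1) → Fin n} (hp : IsPathOn E p) (hdisj : ∀ i j, c i ≠ p j) (i : Fin (m + 1))
    (hi : UAdj E (c i) (p 0)) (hi' : UAdj E (p (Fin.last k)) (c (i + 1))) :
    ∃ g : Fin (m + 1 + (k + 1)) → Fin n,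
      IsCycleOn E g ∧ sigmaMinusCyc E g ≤ sigmaMinusCyc E c + sigmaMinusPath E p + 2 := by
  classical
  set a : Fin (m + 1) → Fin n := fun t => c (i + 1 + t) with ha_def
  have hm : 2 ≤ m := by have := hc.1; omega
  have ha_last : a (Fin.last m) = c i := by
    show c (i + 1 + Fin.last m) = c i
    rw [add_assoc, add_comm 1, Fin.last_add_one, add_zero]
  have ha_zero : a 0 = c (i + 1) := by simp only [ha_def, add_zero]
  have ha : IsPathOn E a := ((isCycleOn_iff_isPathOn hm a).1 (hc.comp_add_left (i + 1))).1
  have hg : IsPathOn E (Fin.append a p :) :=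
    ha.append hp (ha_last ▸ hi) fun s j => hdisj (i + 1 + s) j
  refine ⟨Fin.append a p, (isCycleOn_iff_isPathOn (N := m + 1 + k) (by omega) _).2 ⟨hg, ?_⟩, ?_⟩
  · have h0 : Fin.append a p 0 = a 0 := Fin.append_left a p 0
    rwa [← Fin.natAdd_last, Fin.append_right, h0, ha_zero]
  · have ha_le : sigmaMinusPath E a ≤ sigmaMinusCyc E c := by
      rw [← sigmaMinusCyc_comp_add_left c (i + 1), sigmaMinusCyc_eq_sigmaMinusPath_add]
      exact Nat.le_add_right _ _
    calc sigmaMinusCyc E (Fin.append a p :)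
        ≤ sigmaMinusPath E (Fin.append a p :) + 1 := by
          rw [sigmaMinusCyc_eq_sigmaMinusPath_add]
          gcongr
          exact ite_le_one le_rfl zero_le_one
      _ ≤ sigmaMinusPath E a + 1 + sigmaMinusPath E p + 1 := by
          rw [sigmaMinusPath_append]
          gcongr
          exact ite_le_one le_rfl zero_le_one
      _ ≤ sigmaMinusCyc E c + sigmaMinusPath E p + 2 := by omega

end CyclesAndPaths

section Degrees
open Finset

open Classical in
theorem udeg_le_card_add_card {V ι : Type*} [Fintype V] [Fintype ι] (E : V → V → Prop) (x : V)
    (f : ι → V) (S : Finset V) (h : ∀ y, UAdj E x y → (∃ i, f i = y) ∨ y ∈ S) :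
    udeg E x ≤ #{i | UAdj E x (f i)} + #S :=
  calc udeg E x = #{y | UAdj E x y} := by
        rw [udeg, Nat.card_eq_fintype_card, Fintype.card_subtype]
    _ ≤ #(({i | UAdj E x (f i)} : Finset ι).image f ∪ S) := card_le_card fun y hy => by
        obtain ⟨i, rfl⟩ | hS := h y (mem_filter.1 hy).2
        · exact mem_union_left _ (mem_image_of_mem f (by simpa using (mem_filter.1 hy).2))
        · exact mem_union_right _ hS
    _ ≤ _ := (card_union_le _ _).trans (Nat.add_le_add_right card_image_le _)

open Classical in
theorem udeg_path_vertex_le {n k : ℕ} {ι : Type*} [Fintype ι] {E : Fin n → Fin n → Prop}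
    (hE : Oriented E) (c : ι → Fin n) (p : Fin (k + 1) → Fin n)
    (hcover : ∀ x, (∃ i, c i = x) ∨ ∃ j, p j = x) (j : Fin (k + 1)) :
    udeg E (p j) ≤ #{i | UAdj E (p j) (c i)} + k := by
  refine (udeg_le_card_add_card E (p j) c ((univ.image p).erase (p j)) fun y hy => ?_).trans ?_
  · refine (hcover y).imp_right fun ⟨j', hj'⟩ =>
      mem_erase.2 ⟨?_, hj' ▸ mem_image_of_mem p (mem_univ j')⟩
    rintro rfl
    exact hE.not_uAdj_self_s15 _ hy
  · gcongr
    rw [card_erase_of_mem (mem_image_of_mem p (mem_univ j))]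
    have := (card_image_le (s := univ) (f := p)).trans_eq (card_fin (k + 1))
    omega

theorem exists_cycle_edge_uAdj_path_ends {n m k δ : ℕ} {E : Fin n → Fin n → Prop}
    (hE : Oriented E) (c : Fin (m + 1) → Fin n) (p : Fin (k + 1) → Fin n)
    (hcover : ∀ x, (∃ i, c i = x) ∨ ∃ j, p j = x) (hδlb : ∀ x, δ ≤ udeg E x)
    (hδ : m + 1 + 2 * k < 2 * δ) :
    ∃ i, UAdj E (c i) (p 0) ∧ UAdj E (p (Fin.last k)) (c (i + 1)) := by
  classical
  have hcover' : ∀ x, (∃ i, c (i + 1) = x) ∨ ∃ j, p j = x := fun x =>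
    (hcover x).imp_left fun ⟨i, hi⟩ => ⟨i - 1, by rwa [sub_add_cancel]⟩
  have hA := (hδlb _).trans (udeg_path_vertex_le hE c p hcover 0)
  have hB := (hδlb _).trans (udeg_path_vertex_le hE (fun i => c (i + 1)) p hcover' (Fin.last k))
  obtain ⟨i, hi⟩ := inter_nonempty_of_card_lt_card_add_card
    (subset_univ {i | UAdj E (p 0) (c i)}) (subset_univ {i | UAdj E (p (Fin.last k)) (c (i + 1))})
    (by rw [card_univ, Fintype.card_fin]; omega)
  simp only [mem_inter, mem_filter, mem_univ, true_and] at hi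
  exact ⟨i, hi.1.symm, hi.2⟩

end Degrees

/-- **Lemma, case `s = 3`.** `δ(G) ≥ n/2 + 1`, `P = u₁u₂u₃` a path with `σ⁻(P) ≤ 1`,
`C` a cycle on the remaining `n - 3` vertices with `σ⁻(C) ≤ ℓ - 3`. Then `G` has a
Hamilton cycle `C*` with `σ_min(C*) ≤ ℓ`. -/
theorem path_cycle_insert_base_three (n ℓ δ : ℕ)
    (E : Fin n → Fin n → Prop) (hE : Oriented E)
    (hδlb : ∀ x : Fin n, δ ≤ udeg E x) (hδ : n + 2 ≤ 2 * δ)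
    (p : Fin (2 + 1) → Fin n) (hp : IsPathOn E p) (hpσ : sigmaMinusPath E p ≤ 1)
    (c : Fin (n - 3) → Fin n) (hc : IsCycleOn E c)
    (hdisj : ∀ i j, c i ≠ p j)
    (hcover : ∀ x : Fin n, (∃ i, c i = x) ∨ (∃ j, p j = x))
    (hσC : sigmaMinusCyc E c + 3 ≤ ℓ) :
    ∃ C : Fin n → Fin n, IsHamCycle E C ∧ sigmaMinHC E C ≤ ℓ := by
  generalize hN : n - 3 = N at c hc hdisj hcover hσC
  obtain ⟨m, rfl⟩ : ∃ m, N = m + 1 := ⟨N - 1, by have := hc.1; omega⟩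
  obtain rfl : n = m + 1 + (2 + 1) := by have := hc.1; omega
  obtain ⟨i, hi, hi'⟩ := exists_cycle_edge_uAdj_path_ends hE c p hcover hδlb (by omega)
  obtain ⟨C, hC, hCσ⟩ := hc.exists_insert_path hp hdisj i hi hi'
  exact ⟨C, hC.isHamCycle, (min_le_right _ _).trans (show sigmaMinusCyc E C ≤ ℓ by omega)⟩
end
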